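/- arXiv:1608.07571 — 6 statements merged into one kernel-verified Lean document; each statement's English description precedes it below -/
import Mathlib

section
/- Let m > 0, let (a_k)_{k∈ℕ} be a countable family of real numbers and (h_k)_{k∈ℕ} a countable family of positive real numbers. Then the Lebesgue measure of the union ⋃_k (a_k, a_k + m·h_k) is at least m/(m+1) times the Lebesgue measure of the union ⋃_k (a_k − h_k, a_k]. -/
open MeasureTheory Set

/-- Finite version of the covering lemma. -/
lemma interval_stack_cover_finset (m : ℝ) (hm : 0 < m) (a h : ℕ → ℝ) (hh : ∀ k, 0 < h k)
    (F : Finset ℕ) :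
    volume (⋃ k ∈ F, Ioo (a k - h k) (a k + m * h k)) ≤
      ENNReal.ofReal ((m + 1) / m) * volume (⋃ k ∈ F, Ioo (a k) (a k + m * h k)) := by
  induction F using Finset.strongInduction with
  | _ F ih =>
    rcases F.eq_empty_or_nonempty with rfl | hF
    · simp
    obtain ⟨k0, hk0F, hmax⟩ := F.exists_max_image a hF
    set F' := F.erase k0 with hF'
    have hF'ss : F' ⊂ F := Finset.erase_ssubset hk0F
    have ihF' := ih F' hF'ss
    set U' : Set ℝ := ⋃ k ∈ F', Ioo (a k - h k) (a k + m * h k) with hU'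
    set W' : Set ℝ := ⋃ k ∈ F', Ioo (a k) (a k + m * h k) with hW'
    have hW'meas : MeasurableSet W' :=
      MeasurableSet.biUnion F'.countable_toSet (fun _ _ => measurableSet_Ioo)
    -- decompose the unions
    have hUF : (⋃ k ∈ F, Ioo (a k - h k) (a k + m * h k))
        = Ioo (a k0 - h k0) (a k0 + m * h k0) ∪ U' := by
      rw [hU', hF']
      conv_lhs => rw [← Finset.insert_erase hk0F, Finset.set_biUnion_insert]
    have hWF : (⋃ k ∈ F, Ioo (a k) (a k + m * h k))
        = W' ∪ Ioo (a k0) (a k0 + m * h k0) := by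
      rw [hW', hF']
      conv_lhs => rw [← Finset.insert_erase hk0F, Finset.set_biUnion_insert]
      rw [Set.union_comm]
    -- the key estimate
    have key : volume (Ioo (a k0 - h k0) (a k0 + m * h k0) \ U') ≤
        ENNReal.ofReal ((m + 1) / m) * volume (Ioo (a k0) (a k0 + m * h k0) \ W') := by
      by_cases hS : ∃ k ∈ F', a k0 < a k + m * h k
      · -- pick the interfering chunk with largest right endpoint
        set S := F'.filter (fun k => a k0 < a k + m * h k) with hSdef
        have hSne : S.Nonempty := by
          obtain ⟨k, hk, hk2⟩ := hS
          exact ⟨k, Finset.mem_filter.2 ⟨hk, hk2⟩⟩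
        obtain ⟨j, hjS, hjmax⟩ := S.exists_max_image (fun k => a k + m * h k) hSne
        have hjF' : j ∈ F' := (Finset.mem_filter.1 hjS).1
        have hjF : j ∈ F := Finset.mem_of_mem_erase hjF'
        have hja : a j ≤ a k0 := hmax j hjF
        have hjr : a k0 < a j + m * h j := (Finset.mem_filter.1 hjS).2
        rcases le_or_gt (a k0 + m * h k0) (a j + m * h j) with hr | hr
        · -- the chunk of j sticks out past everything: left-over is empty
          have hempty : Ioo (a k0 - h k0) (a k0 + m * h k0) \ U' = ∅ := by
            apply Set.eq_empty_of_subset_empty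
            intro x ⟨hx1, hx2⟩
            exact hx2 (Set.mem_biUnion hjF' ⟨by nlinarith [hx1.1, hh j, hh k0], lt_of_lt_of_le hx1.2 hr⟩)
          simp [hempty]
        · -- generic case
          have hsub1 : Ioo (a k0 - h k0) (a k0 + m * h k0) \ U' ⊆
              Ioc (a k0 - h k0) (a j - h j) ∪ Ico (a j + m * h j) (a k0 + m * h k0) := by
            intro x ⟨hx1, hx2⟩
            have hxj : x ∉ Ioo (a j - h j) (a j + m * h j) := fun hx =>
              hx2 (Set.mem_biUnion hjF' hx)
            rcases lt_or_ge (a j - h j) x with h1 | h1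
            · right
              refine ⟨le_of_not_gt fun h2 => hxj ⟨h1, h2⟩, hx1.2⟩
            · left; exact ⟨hx1.1, h1⟩
          have hsub2 : Ico (a j + m * h j) (a k0 + m * h k0) ⊆
              Ioo (a k0) (a k0 + m * h k0) \ W' := by
            intro x ⟨hx1, hx2⟩
            refine ⟨⟨lt_of_lt_of_le hjr hx1, hx2⟩, ?_⟩
            intro hxW
            obtain ⟨k, hkF', hxk⟩ := Set.mem_iUnion₂.1 hxW
            have hkS : k ∈ S := Finset.mem_filter.2 ⟨hkF', lt_of_le_of_lt (le_of_lt (lt_of_lt_of_le hjr hx1)) hxk.2⟩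
            exact absurd (lt_of_lt_of_le hxk.2 (hjmax k hkS)) (not_lt.2 hx1)
          have hv2 : ENNReal.ofReal (a k0 + m * h k0 - (a j + m * h j)) ≤
              volume (Ioo (a k0) (a k0 + m * h k0) \ W') := by
            calc ENNReal.ofReal (a k0 + m * h k0 - (a j + m * h j))
                = volume (Ico (a j + m * h j) (a k0 + m * h k0)) := (Real.volume_Ico).symm
              _ ≤ _ := measure_mono hsub2
          have harith : a j - h j - (a k0 - h k0) ≤
              (1 / m) * (a k0 + m * h k0 - (a j + m * h j)) := by
            rw [div_mul_eq_mul_div, le_div_iff₀ hm]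
            nlinarith
          calc volume (Ioo (a k0 - h k0) (a k0 + m * h k0) \ U')
              ≤ volume (Ioc (a k0 - h k0) (a j - h j) ∪
                  Ico (a j + m * h j) (a k0 + m * h k0)) := measure_mono hsub1
            _ ≤ ENNReal.ofReal (a j - h j - (a k0 - h k0)) +
                ENNReal.ofReal (a k0 + m * h k0 - (a j + m * h j)) := by
                refine (measure_union_le _ _).trans ?_
                rw [Real.volume_Ioc, Real.volume_Ico]
            _ ≤ ENNReal.ofReal ((1 / m) * (a k0 + m * h k0 - (a j + m * h j))) +
                ENNReal.ofReal (a k0 + m * h k0 - (a j + m * h j)) := by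
                exact add_le_add_left (ENNReal.ofReal_le_ofReal harith) _
            _ = ENNReal.ofReal ((m + 1) / m * (a k0 + m * h k0 - (a j + m * h j))) := by
                rw [← ENNReal.ofReal_add (mul_nonneg (by positivity) (by linarith)) (by linarith)]
                congr 1
                field_simp
                ring
            _ = ENNReal.ofReal ((m + 1) / m) *
                ENNReal.ofReal (a k0 + m * h k0 - (a j + m * h j)) := by
                rw [ENNReal.ofReal_mul (by positivity)]
            _ ≤ _ := by exact mul_le_mul_right hv2 _
      · -- no chunk interferes with the chunk of k0
        push_neg at hS
        have hdisj : Ioo (a k0) (a k0 + m * h k0) \ W' = Ioo (a k0) (a k0 + m * h k0) := by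
          rw [sdiff_eq_self_iff_disjoint]
          rw [Set.disjoint_left]
          intro x hxW hx
          obtain ⟨k, hkF', hxk⟩ := Set.mem_iUnion₂.1 hxW
          exact absurd (lt_of_lt_of_le hxk.2 (hS k hkF')) (not_lt.2 (le_of_lt hx.1))
        rw [hdisj, Real.volume_Ioo, ← ENNReal.ofReal_mul (by positivity)]
        calc volume (Ioo (a k0 - h k0) (a k0 + m * h k0) \ U')
            ≤ volume (Ioo (a k0 - h k0) (a k0 + m * h k0)) := measure_mono (Set.diff_subset)
          _ = ENNReal.ofReal (a k0 + m * h k0 - (a k0 - h k0)) := Real.volume_Ioo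
          _ ≤ ENNReal.ofReal ((m + 1) / m * (a k0 + m * h k0 - a k0)) := by
              apply ENNReal.ofReal_le_ofReal
              rw [div_mul_eq_mul_div, le_div_iff₀ hm]
              nlinarith [hh k0]
    -- assemble
    calc volume (⋃ k ∈ F, Ioo (a k - h k) (a k + m * h k))
        ≤ volume U' + volume (Ioo (a k0 - h k0) (a k0 + m * h k0) \ U') := by
          rw [hUF]
          refine (measure_mono ?_).trans (measure_union_le _ _)
          intro x hx
          rcases hx with hx | hx
          · by_cases hxU : x ∈ U'
            · exact Or.inl hxU
            · exact Or.inr ⟨hx, hxU⟩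
          · exact Or.inl hx
      _ ≤ ENNReal.ofReal ((m + 1) / m) * volume W' +
          ENNReal.ofReal ((m + 1) / m) * volume (Ioo (a k0) (a k0 + m * h k0) \ W') := by
          gcongr
      _ = ENNReal.ofReal ((m + 1) / m) *
          (volume W' + volume (Ioo (a k0) (a k0 + m * h k0) \ W')) := by ring
      _ = ENNReal.ofReal ((m + 1) / m) * volume (⋃ k ∈ F, Ioo (a k) (a k + m * h k)) := by
          rw [measure_add_diff hW'meas.nullMeasurableSet, ← hWF]

/-- **Covering lemma for one-dimensional intervals.**
Let `m > 0`, `(a k)` a countable family of reals and `(h k)` a countable family of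
positive reals. Then the Lebesgue measure of `⋃ k, (a k, a k + m * h k)` is at least
`m / (m + 1)` times the Lebesgue measure of `⋃ k, (a k - h k, a k]`. -/
theorem interval_stack_cover (m : ℝ) (hm : 0 < m) (a h : ℕ → ℝ) (hh : ∀ k, 0 < h k) :
    ENNReal.ofReal (m / (m + 1)) * volume (⋃ k, Ioc (a k - h k) (a k)) ≤
      volume (⋃ k, Ioo (a k) (a k + m * h k)) := by
  have hsub : (⋃ k, Ioc (a k - h k) (a k)) ⊆ ⋃ k, Ioo (a k - h k) (a k + m * h k) := by
    refine Set.iUnion_mono fun k => ?_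
    intro x hx
    exact ⟨hx.1, lt_of_le_of_lt hx.2 (by nlinarith [hh k, hm])⟩
  have hbig : volume (⋃ k, Ioo (a k - h k) (a k + m * h k)) ≤
      ENNReal.ofReal ((m + 1) / m) * volume (⋃ k, Ioo (a k) (a k + m * h k)) := by
    have heq : (⋃ k, Ioo (a k - h k) (a k + m * h k)) =
        ⋃ n, ⋃ k ∈ Finset.range n, Ioo (a k - h k) (a k + m * h k) := by
      ext x
      simp only [Set.mem_iUnion, Finset.mem_range]
      exact ⟨fun ⟨k, hk⟩ => ⟨k + 1, k, k.lt_succ_self, hk⟩, fun ⟨n, k, _, hk⟩ => ⟨k, hk⟩⟩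
    rw [heq]
    rw [Directed.measure_iUnion]
    · refine iSup_le fun n => ?_
      refine (interval_stack_cover_finset m hm a h hh (Finset.range n)).trans ?_
      refine mul_le_mul_right (measure_mono ?_) _
      exact Set.iUnion₂_subset fun k _ => Set.subset_iUnion (fun k => Ioo (a k) (a k + m * h k)) k
    · intro i j
      refine ⟨max i j, ?_, ?_⟩ <;>
        exact Set.biUnion_subset_biUnion_left (Finset.range_subset_range.2 (by simp))
  calc ENNReal.ofReal (m / (m + 1)) * volume (⋃ k, Ioc (a k - h k) (a k))
      ≤ ENNReal.ofReal (m / (m + 1)) *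
        (ENNReal.ofReal ((m + 1) / m) * volume (⋃ k, Ioo (a k) (a k + m * h k))) :=
        mul_le_mul_right ((measure_mono hsub).trans hbig) _
    _ = ENNReal.ofReal (m / (m + 1) * ((m + 1) / m)) *
        volume (⋃ k, Ioo (a k) (a k + m * h k)) := by
        rw [ENNReal.ofReal_mul (by positivity), mul_assoc]
    _ = volume (⋃ k, Ioo (a k) (a k + m * h k)) := by
        have h1 : m / (m + 1) * ((m + 1) / m) = 1 := by field_simp
        rw [h1, ENNReal.ofReal_one, one_mul]
end

section
/- Let k ≥ 5 be a real number satisfying k^{2s} ≥ 1 + 2·2^{2s} and k^{1+2s} ≥ 1 + 2·2^{1+2s}. If two slanted kinetic cylinders Q_{r₀}(t₀,x₀,v₀) and Q_{r₁}(t₁,x₁,v₁) have nonempty intersection and 2r₀ ≥ r₁, then Q_{r₁}(t₁,x₁,v₁) ⊆ kQ_{r₀}(t₀,x₀,v₀). -/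
open MeasureTheory Metric Set

noncomputable section

/-- Kinetic phase space `ℝ × ℝ^d × ℝ^d` with variables `z = (t, x, v)`. -/
abbrev Phase (d : ℕ) := ℝ × EuclideanSpace ℝ (Fin d) × EuclideanSpace ℝ (Fin d)

/-- The slanted kinetic cylinder `Q_r(z₀)` of radius `r` centered at `z₀ = (t₀,x₀,v₀)`:
`{(t,x,v) : t₀ - r^{2s} < t ≤ t₀, |v - v₀| < r, |x - x₀ - (t - t₀) v₀| < r^{1+2s}}`. -/
def kinCyl (d : ℕ) (s : ℝ) (z₀ : Phase d) (r : ℝ) : Set (Phase d) :=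
  {z | z₀.1 - r ^ (2 * s) < z.1 ∧ z.1 ≤ z₀.1 ∧ dist z.2.2 z₀.2.2 < r ∧
       ‖z.2.1 - z₀.2.1 - (z.1 - z₀.1) • z₀.2.2‖ < r ^ (1 + 2 * s)}

/-- The dilation `kQ_r(z₀)` of the slanted kinetic cylinder `Q_r(z₀)` by a factor `k`,
keeping the same center. -/
def kinCylDil (d : ℕ) (s k : ℝ) (z₀ : Phase d) (r : ℝ) : Set (Phase d) :=
  {z | -((k ^ (2 * s) + 1) / 2 * r ^ (2 * s)) < z.1 - z₀.1 ∧
       z.1 - z₀.1 ≤ (k ^ (2 * s) - 1) / 2 * r ^ (2 * s) ∧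
       dist z.2.2 z₀.2.2 < k * r ∧
       ‖z.2.1 - z₀.2.1 - (z.1 - z₀.1) • z₀.2.2‖ < (k * r) ^ (1 + 2 * s)}

/-- **Engulfing property of slanted kinetic cylinders.** If `k ≥ 5`,
`k^{2s} ≥ 1 + 2·2^{2s}` and `k^{1+2s} ≥ 1 + 2·2^{1+2s}`, and two slanted cylinders
`Q_{r₀}(z₀)` and `Q_{r₁}(z₁)` intersect with `2 r₀ ≥ r₁`, then
`Q_{r₁}(z₁) ⊆ k Q_{r₀}(z₀)`. -/
theorem kinCyl_subset_dil (d : ℕ) (hd : 1 ≤ d) (s : ℝ) (hs : s ∈ Set.Ioo (0 : ℝ) 1)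
    (k : ℝ) (hk5 : 5 ≤ k)
    (hk1 : 1 + 2 * (2 : ℝ) ^ (2 * s) ≤ k ^ (2 * s))
    (hk2 : 1 + 2 * (2 : ℝ) ^ (1 + 2 * s) ≤ k ^ (1 + 2 * s))
    (z₀ z₁ : Phase d) (r₀ r₁ : ℝ) (hr₀ : 0 < r₀) (hr₁ : 0 < r₁)
    (hr : r₁ ≤ 2 * r₀)
    (hint : (kinCyl d s z₀ r₀ ∩ kinCyl d s z₁ r₁).Nonempty) :
    kinCyl d s z₁ r₁ ⊆ kinCylDil d s k z₀ r₀ := by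
  obtain ⟨s0, s1⟩ := hs
  obtain ⟨t₀, x₀, v₀⟩ := z₀
  obtain ⟨t₁, x₁, v₁⟩ := z₁
  obtain ⟨⟨τ, ξ, ν⟩, hw0, hw1⟩ := hint
  simp only [kinCyl, Set.mem_setOf_eq] at hw0 hw1
  obtain ⟨hw0t, hw0t', hw0v, hw0x⟩ := hw0
  obtain ⟨hw1t, hw1t', hw1v, hw1x⟩ := hw1
  rintro ⟨t, x, v⟩ hz
  simp only [kinCyl, Set.mem_setOf_eq] at hz
  obtain ⟨hzt, hzt', hzv, hzx⟩ := hz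
  have hk0 : (0:ℝ) < k := by linarith
  have h2s : (0:ℝ) < 2 * s := by linarith
  have hQ : (0:ℝ) < (2:ℝ) ^ (2*s) := Real.rpow_pos_of_pos (by norm_num) _
  have hP : (0:ℝ) < r₀ ^ (2*s) := Real.rpow_pos_of_pos hr₀ _
  have hR : (0:ℝ) < r₀ ^ (1+2*s) := Real.rpow_pos_of_pos hr₀ _
  have hle1 : r₁ ^ (2*s) ≤ 2 ^ (2*s) * r₀ ^ (2*s) := by
    rw [← Real.mul_rpow (by norm_num) hr₀.le]
    exact Real.rpow_le_rpow hr₁.le hr h2s.le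
  have hle2 : r₁ ^ (1+2*s) ≤ 2 ^ (1+2*s) * r₀ ^ (1+2*s) := by
    rw [← Real.mul_rpow (by norm_num) hr₀.le]
    exact Real.rpow_le_rpow hr₁.le hr (by linarith)
  have h2split : (2:ℝ) ^ (1+2*s) = 2 * 2 ^ (2*s) := by
    rw [Real.rpow_add (by norm_num), Real.rpow_one]
  have hksplit : k ^ (1+2*s) = k * k ^ (2*s) := by
    rw [Real.rpow_add hk0, Real.rpow_one]
  have hrsplit : r₀ ^ (1+2*s) = r₀ * r₀ ^ (2*s) := by
    rw [Real.rpow_add hr₀, Real.rpow_one]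
  have hmul : (1 + 2 * 2 ^ (2*s)) * (r₀ ^ (2*s)) ≤ k ^ (2*s) * r₀ ^ (2*s) :=
    mul_le_mul_of_nonneg_right hk1 hP.le
  refine ⟨?_, ?_, ?_, ?_⟩
  · -- time lower bound
    simp only
    nlinarith [hzt, hw1t', hw0t, hle1, hmul]
  · -- time upper bound
    simp only
    nlinarith [hzt', hw1t, hw0t', hle1, hmul]
  · -- velocity bound
    simp only
    have htri : dist v v₀ ≤ dist v v₁ + dist v₁ ν + dist ν v₀ := dist_triangle4 v v₁ ν v₀
    have h1 : dist v₁ ν < r₁ := by rw [dist_comm]; exact hw1v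
    have h5 : 5 * r₀ ≤ k * r₀ := mul_le_mul_of_nonneg_right hk5 hr₀.le
    linarith
  · -- position bound
    simp only
    have key : x - x₀ - (t - t₀) • v₀ =
        ((x - x₁ - (t - t₁) • v₁) - (ξ - x₁ - (τ - t₁) • v₁)) +
        ((ξ - x₀ - (τ - t₀) • v₀) + (τ - t) • (v₀ - v₁)) := by
      module
    have hτt : |τ - t| < r₁ ^ (2*s) := abs_lt.mpr ⟨by linarith, by linarith⟩
    have hv01 : ‖v₀ - v₁‖ ≤ 3 * r₀ := by
      rw [← dist_eq_norm]
      have htri : dist v₀ v₁ ≤ dist v₀ ν + dist ν v₁ := dist_triangle _ _ _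
      have h1 : dist v₀ ν < r₀ := by rw [dist_comm]; exact hw0v
      linarith
    have hd : |τ - t| * ‖v₀ - v₁‖ ≤ r₁ ^ (2*s) * (3 * r₀) :=
      mul_le_mul hτt.le hv01 (norm_nonneg _) (Real.rpow_nonneg hr₁.le _)
    have hn : ‖x - x₀ - (t - t₀) • v₀‖ ≤
        ‖x - x₁ - (t - t₁) • v₁‖ + ‖ξ - x₁ - (τ - t₁) • v₁‖ +
        (‖ξ - x₀ - (τ - t₀) • v₀‖ + |τ - t| * ‖v₀ - v₁‖) := by
      calc ‖x - x₀ - (t - t₀) • v₀‖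
          = ‖((x - x₁ - (t - t₁) • v₁) - (ξ - x₁ - (τ - t₁) • v₁)) +
            ((ξ - x₀ - (τ - t₀) • v₀) + (τ - t) • (v₀ - v₁))‖ := by rw [← key]
        _ ≤ ‖(x - x₁ - (t - t₁) • v₁) - (ξ - x₁ - (τ - t₁) • v₁)‖ +
            ‖(ξ - x₀ - (τ - t₀) • v₀) + (τ - t) • (v₀ - v₁)‖ := norm_add_le _ _
        _ ≤ (‖x - x₁ - (t - t₁) • v₁‖ + ‖ξ - x₁ - (τ - t₁) • v₁‖) +
            (‖ξ - x₀ - (τ - t₀) • v₀‖ + ‖(τ - t) • (v₀ - v₁)‖) :=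
            add_le_add (norm_sub_le _ _) (norm_add_le _ _)
        _ = ‖x - x₁ - (t - t₁) • v₁‖ + ‖ξ - x₁ - (τ - t₁) • v₁‖ +
            (‖ξ - x₀ - (τ - t₀) • v₀‖ + |τ - t| * ‖v₀ - v₁‖) := by
            rw [norm_smul, Real.norm_eq_abs]
    have e1 : r₁ ^ (2*s) * (3 * r₀) ≤ 3 * 2 ^ (2*s) * r₀ ^ (1+2*s) := by
      rw [hrsplit]
      have h := mul_le_mul_of_nonneg_right hle1 (by positivity : (0:ℝ) ≤ 3 * r₀)
      linarith
    have hrw : (k * r₀) ^ (1+2*s) = k ^ (1+2*s) * r₀ ^ (1+2*s) :=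
      Real.mul_rpow hk0.le hr₀.le
    rw [hrw, hksplit]
    have h5 : 5 * (1 + 2 * 2 ^ (2*s)) ≤ k * k ^ (2*s) :=
      mul_le_mul hk5 hk1 (by positivity) hk0.le
    have h7 : (1 + 2 * (2 * 2 ^ (2*s)) + 3 * 2 ^ (2*s)) ≤ k * k ^ (2*s) := by linarith
    have h8 := mul_le_mul_of_nonneg_right h7 hR.le
    have hle2' : r₁ ^ (1+2*s) ≤ 2 * 2 ^ (2*s) * r₀ ^ (1+2*s) := by
      rw [← h2split]; linarith [hle2]
    linarith [hn, hzx, hw1x, hw0x, hd, e1, hle2', h8]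
end
end

section
/- Vitali covering lemma for slanted kinetic cylinders: let k ≥ 5 satisfy k^{2s} ≥ 1 + 2·2^{2s} and k^{1+2s} ≥ 1 + 2·2^{1+2s}, and let {Q_{r_j}(z_j)}_{j∈J} be an arbitrary family of slanted kinetic cylinders with sup_{j∈J} r_j < ∞. Then there exists a countable subfamily, indexed by i ↦ j_i, such that the cylinders Q_{r_{j_i}}(z_{j_i}) are pairwise disjoint and ⋃_{j∈J} Q_{r_j}(z_j) ⊆ ⋃_i kQ_{r_{j_i}}(z_{j_i}). -/
open MeasureTheory Metric Set

noncomputable section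

lemma kin_arith (t P k K a c : ℝ) (ht : 0 ≤ t) (hP : 0 ≤ P)
    (ha : a ≤ 2 * t * P) (hc : c ≤ 3 * t * P)
    (hk5 : 5 ≤ k) (hK : 1 + 2 * t ≤ K) (hKpos : 0 ≤ K) :
    a + a + P + c ≤ k * K * P := by
  nlinarith [mul_nonneg (mul_nonneg (sub_nonneg.2 hk5) hKpos) hP,
    mul_nonneg ht hP, mul_le_mul_of_nonneg_right hK hP,
    mul_nonneg hKpos hP]

lemma kinCyl_center_mem (d : ℕ) (s : ℝ) (hs : 0 < s) (z₀ : Phase d) (r : ℝ) (hr : 0 < r) :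
    z₀ ∈ kinCyl d s z₀ r := by
  refine ⟨by nlinarith [Real.rpow_pos_of_pos hr (2*s)], le_rfl, by simpa using hr, ?_⟩
  simpa using Real.rpow_pos_of_pos hr (1 + 2*s)

lemma kinCyl_interior_nonempty (d : ℕ) (s : ℝ) (hs : 0 < s) (z₀ : Phase d) (r : ℝ)
    (hr : 0 < r) : (interior (kinCyl d s z₀ r)).Nonempty := by
  set O : Set (Phase d) := {z | z₀.1 - r ^ (2 * s) < z.1 ∧ z.1 < z₀.1 ∧
      dist z.2.2 z₀.2.2 < r ∧ ‖z.2.1 - z₀.2.1 - (z.1 - z₀.1) • z₀.2.2‖ < r ^ (1 + 2 * s)} with hO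
  have hOopen : IsOpen O := by
    apply IsOpen.and (isOpen_lt continuous_const continuous_fst)
    apply IsOpen.and (isOpen_lt continuous_fst continuous_const)
    apply IsOpen.and (isOpen_lt (by fun_prop) continuous_const)
    exact isOpen_lt (by fun_prop) continuous_const
  have hsub : O ⊆ kinCyl d s z₀ r := fun w hw => ⟨hw.1, hw.2.1.le, hw.2.2⟩
  have hpos := Real.rpow_pos_of_pos hr (2*s)
  refine ⟨(z₀.1 - r ^ (2*s) / 2, z₀.2.1 + (-(r ^ (2*s) / 2)) • z₀.2.2, z₀.2.2),
    interior_maximal hsub hOopen ?_⟩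
  refine ⟨by dsimp; linarith, by dsimp; linarith, by simpa using hr, ?_⟩
  have : (z₀.2.1 + (-(r ^ (2*s) / 2)) • z₀.2.2) - z₀.2.1
      - ((z₀.1 - r ^ (2*s) / 2) - z₀.1) • z₀.2.2 = 0 := by
    rw [show (z₀.1 - r ^ (2*s) / 2) - z₀.1 = -(r ^ (2*s) / 2) by ring]
    abel
  simpa [this] using Real.rpow_pos_of_pos hr (1 + 2*s)

lemma kinCyl_subset_dil_s2 (d : ℕ) (s : ℝ) (hs : 0 < s) (k : ℝ) (hk5 : 5 ≤ k)
    (hk1 : 1 + 2 * (2 : ℝ) ^ (2 * s) ≤ k ^ (2 * s))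
    (za zb : Phase d) (ra rb : ℝ) (hra : 0 < ra) (hrb : 0 < rb) (hab : ra ≤ 2 * rb)
    (hne : (kinCyl d s za ra ∩ kinCyl d s zb rb).Nonempty) :
    kinCyl d s za ra ⊆ kinCylDil d s k zb rb := by
  obtain ⟨y, ⟨hy1, hy2, hy3, hy4⟩, ⟨gy1, gy2, gy3, gy4⟩⟩ := hne
  rintro w ⟨hw1, hw2, hw3, hw4⟩
  have hkpos : (0:ℝ) < k := by linarith
  have h2s : (0:ℝ) < 2 * s := by linarith
  have hb2s := Real.rpow_pos_of_pos hrb (2*s)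
  have hbβ := Real.rpow_pos_of_pos hrb (1 + 2*s)
  have ht2 : (0:ℝ) < 2 ^ (2*s) := Real.rpow_pos_of_pos two_pos _
  have hk2s : (0:ℝ) < k ^ (2*s) := Real.rpow_pos_of_pos hkpos _
  -- comparisons of powers
  have hra2 : ra ^ (2*s) ≤ 2 ^ (2*s) * rb ^ (2*s) := by
    calc ra ^ (2*s) ≤ (2*rb) ^ (2*s) := Real.rpow_le_rpow hra.le hab h2s.le
    _ = 2 ^ (2*s) * rb ^ (2*s) := Real.mul_rpow (by norm_num) hrb.le
  have hraβ : ra ^ (1 + 2*s) ≤ 2 ^ (1 + 2*s) * rb ^ (1 + 2*s) := by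
    calc ra ^ (1+2*s) ≤ (2*rb) ^ (1+2*s) := Real.rpow_le_rpow hra.le hab (by linarith)
    _ = 2 ^ (1+2*s) * rb ^ (1+2*s) := Real.mul_rpow (by norm_num) hrb.le
  have h2β : (2:ℝ) ^ (1 + 2*s) = 2 * 2 ^ (2*s) := by
    rw [Real.rpow_add two_pos, Real.rpow_one]
  have hkβ : k ^ (1 + 2*s) = k * k ^ (2*s) := by
    rw [Real.rpow_add hkpos, Real.rpow_one]
  have hrbβ : rb ^ (2*s) * rb = rb ^ (1 + 2*s) := by
    rw [show (1:ℝ) + 2*s = 2*s + 1 by ring, Real.rpow_add hrb, Real.rpow_one]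
  refine ⟨?_, ?_, ?_, ?_⟩
  · -- lower time bound
    nlinarith [hw1, hy2, gy1]
  · -- upper time bound
    nlinarith [hw2, hy1, gy2]
  · -- velocity bound
    have := dist_triangle4 w.2.2 za.2.2 y.2.2 zb.2.2
    rw [dist_comm za.2.2 y.2.2] at this
    nlinarith
  · -- position bound
    have hid : w.2.1 - zb.2.1 - (w.1 - zb.1) • zb.2.2
        = (w.2.1 - za.2.1 - (w.1 - za.1) • za.2.2)
          - (y.2.1 - za.2.1 - (y.1 - za.1) • za.2.2)
          + (y.2.1 - zb.2.1 - (y.1 - zb.1) • zb.2.2)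
          + (w.1 - y.1) • (za.2.2 - zb.2.2) := by
      module
    have htime : |w.1 - y.1| ≤ ra ^ (2*s) := by
      rw [abs_sub_le_iff]; constructor <;> linarith
    have hvel : ‖za.2.2 - zb.2.2‖ ≤ ra + rb := by
      rw [← dist_eq_norm]
      calc dist za.2.2 zb.2.2 ≤ dist za.2.2 y.2.2 + dist y.2.2 zb.2.2 := dist_triangle _ _ _
      _ ≤ ra + rb := by rw [dist_comm za.2.2 y.2.2]; exact add_le_add hy3.le gy3.le
    have hD : ‖(w.1 - y.1) • (za.2.2 - zb.2.2)‖ ≤ ra ^ (2*s) * (ra + rb) := by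
      rw [norm_smul, Real.norm_eq_abs]
      exact mul_le_mul htime hvel (norm_nonneg _) (Real.rpow_pos_of_pos hra _).le
    have hE : ‖w.2.1 - zb.2.1 - (w.1 - zb.1) • zb.2.2‖
        < ra ^ (1+2*s) + ra ^ (1+2*s) + rb ^ (1+2*s) + ra ^ (2*s) * (ra + rb) := by
      rw [hid]
      have t1 := norm_add_le ((w.2.1 - za.2.1 - (w.1 - za.1) • za.2.2)
          - (y.2.1 - za.2.1 - (y.1 - za.1) • za.2.2)
          + (y.2.1 - zb.2.1 - (y.1 - zb.1) • zb.2.2)) ((w.1 - y.1) • (za.2.2 - zb.2.2))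
      have t2 := norm_add_le ((w.2.1 - za.2.1 - (w.1 - za.1) • za.2.2)
          - (y.2.1 - za.2.1 - (y.1 - za.1) • za.2.2)) (y.2.1 - zb.2.1 - (y.1 - zb.1) • zb.2.2)
      have t3 := norm_sub_le (w.2.1 - za.2.1 - (w.1 - za.1) • za.2.2)
          (y.2.1 - za.2.1 - (y.1 - za.1) • za.2.2)
      linarith
    have hfin : ra ^ (1+2*s) + ra ^ (1+2*s) + rb ^ (1+2*s) + ra ^ (2*s) * (ra + rb)
        ≤ (k * rb) ^ (1 + 2*s) := by
      rw [Real.mul_rpow hkpos.le hrb.le, hkβ]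
      have h1 : ra ^ (2*s) * (ra + rb) ≤ 3 * (2 ^ (2*s)) * rb ^ (1+2*s) := by
        have h3 : ra + rb ≤ 3 * rb := by linarith
        calc ra ^ (2*s) * (ra+rb) ≤ (2^(2*s) * rb^(2*s)) * (3*rb) :=
          mul_le_mul hra2 h3 (by linarith) (by positivity)
        _ = 3 * (2^(2*s)) * rb^(1+2*s) := by rw [← hrbβ]; ring
      have h2 : ra ^ (1+2*s) ≤ 2 * (2^(2*s)) * rb^(1+2*s) := by
        calc ra ^ (1+2*s) ≤ 2^(1+2*s) * rb^(1+2*s) := hraβ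
        _ = 2 * (2^(2*s)) * rb^(1+2*s) := by rw [h2β]
      exact kin_arith (2^(2*s)) (rb^(1+2*s)) k (k^(2*s)) _ _ ht2.le hbβ.le
        (by linarith) (by linarith) hk5 hk1 hk2s.le
    exact lt_of_lt_of_le hE hfin

/-- **Vitali covering lemma for slanted kinetic cylinders.** Given an arbitrary family of
slanted kinetic cylinders with uniformly bounded radii, there is a countable subfamily of
pairwise disjoint cylinders whose `k`-dilations cover the union of the whole family. -/
theorem kinCyl_vitali (d : ℕ) (hd : 1 ≤ d) (s : ℝ) (hs : s ∈ Set.Ioo (0 : ℝ) 1)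
    (k : ℝ) (hk5 : 5 ≤ k)
    (hk1 : 1 + 2 * (2 : ℝ) ^ (2 * s) ≤ k ^ (2 * s))
    (hk2 : 1 + 2 * (2 : ℝ) ^ (1 + 2 * s) ≤ k ^ (1 + 2 * s))
    (J : Type*) (z : J → Phase d) (r : J → ℝ) (hr : ∀ j, 0 < r j)
    (hbdd : ∃ M : ℝ, ∀ j, r j ≤ M) :
    ∃ S : Set J, S.Countable ∧
      (S.PairwiseDisjoint fun j => kinCyl d s (z j) (r j)) ∧
      (⋃ j, kinCyl d s (z j) (r j)) ⊆ ⋃ j ∈ S, kinCylDil d s k (z j) (r j) := by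
  obtain ⟨M, hM⟩ := hbdd
  obtain ⟨u, -, hdisj, hcov⟩ := Vitali.exists_disjoint_subfamily_covering_enlargement
    (fun j => kinCyl d s (z j) (r j)) Set.univ r 2 one_lt_two
    (fun j _ => (hr j).le) M (fun j _ => hM j)
    (fun j _ => ⟨z j, kinCyl_center_mem d s hs.1 (z j) (r j) (hr j)⟩)
  refine ⟨u, ?_, hdisj, ?_⟩
  · exact hdisj.countable_of_nonempty_interior
      (fun j _ => kinCyl_interior_nonempty d s hs.1 (z j) (r j) (hr j))
  · rintro w hw
    simp only [mem_iUnion] at hw ⊢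
    obtain ⟨a, ha⟩ := hw
    obtain ⟨b, hb, hne, hle⟩ := hcov a (mem_univ a)
    exact ⟨b, hb, kinCyl_subset_dil_s2 d s hs.1 k hk5 hk1 (z a) (z b) (r a) (r b)
      (hr a) (hr b) (by linarith) hne ha⟩
end
end

section
/- Weak (1,1) maximal inequality for slanted kinetic cylinders: there is a constant C > 0, depending only on d and s, such that for every f ∈ L¹(ℝ × ℝ^d × ℝ^d) and every λ > 0, the set { z : there exists a slanted kinetic cylinder Q_r(z₀) containing z with ∫_{Q_r(z₀)} |f| > λ |Q_r(z₀)| } has Lebesgue outer measure at most (C/λ) ‖f‖_{L¹(ℝ×ℝ^d×ℝ^d)}. -/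
open MeasureTheory Metric Set

noncomputable section

def slab (d : ℕ) (t₀ : ℝ) (x₀ v₀ : EuclideanSpace ℝ (Fin d)) (T : Set ℝ) (R ρ : ℝ) :
    Set (Phase d) :=
  {z | z.1 ∈ T ∧ dist z.2.2 v₀ < ρ ∧ ‖z.2.1 - x₀ - (z.1 - t₀) • v₀‖ < R}

lemma measurableSet_slab {d : ℕ} {t₀ : ℝ} {x₀ v₀ : EuclideanSpace ℝ (Fin d)} {T : Set ℝ}
    {R ρ : ℝ} (hT : MeasurableSet T) : MeasurableSet (slab d t₀ x₀ v₀ T R ρ) := by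
  haveI : OpensMeasurableSpace (Phase d) := by infer_instance
  apply MeasurableSet.inter (measurable_fst hT)
  apply MeasurableSet.inter
  · exact measurableSet_lt
      (((continuous_snd.comp continuous_snd).dist continuous_const).measurable) measurable_const
  · exact measurableSet_lt
      ((((((continuous_fst.comp continuous_snd)).sub continuous_const).sub
        ((continuous_fst.sub continuous_const).smul continuous_const)).norm).measurable)
      measurable_const

lemma slab_volume {d : ℕ} (hd : 1 ≤ d) (t₀ : ℝ) (x₀ v₀ : EuclideanSpace ℝ (Fin d)) {T : Set ℝ}
    (hT : MeasurableSet T) {R ρ : ℝ} (hR : 0 ≤ R) (hρ : 0 ≤ ρ) :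
    volume (slab d t₀ x₀ v₀ T R ρ) =
      volume T * (ENNReal.ofReal (R ^ d) * volume (ball (0 : EuclideanSpace ℝ (Fin d)) 1))
        * (ENNReal.ofReal (ρ ^ d) * volume (ball (0 : EuclideanSpace ℝ (Fin d)) 1)) := by
  haveI : Nontrivial (EuclideanSpace ℝ (Fin d)) :=
    Module.nontrivial_of_finrank_pos (R := ℝ) (by simp [finrank_euclideanSpace_fin]; omega)
  set c := volume (ball (0 : EuclideanSpace ℝ (Fin d)) 1) with hc
  rw [Measure.volume_eq_prod, Measure.prod_apply (measurableSet_slab hT)]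
  have key : ∀ t : ℝ, volume (Prod.mk t ⁻¹' slab d t₀ x₀ v₀ T R ρ) =
      T.indicator (fun _ => (ENNReal.ofReal (R ^ d) * c) * (ENNReal.ofReal (ρ ^ d) * c)) t := by
    intro t
    by_cases ht : t ∈ T
    · have hpre : Prod.mk t ⁻¹' slab d t₀ x₀ v₀ T R ρ =
          (ball (x₀ + (t - t₀) • v₀) R) ×ˢ (ball v₀ ρ) := by
        ext p
        simp only [slab, mem_preimage, mem_setOf_eq, mem_prod, mem_ball, dist_eq_norm,
          sub_add_eq_sub_sub, ht, true_and]
        tauto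
      rw [hpre, indicator_of_mem ht, Measure.volume_eq_prod, Measure.prod_prod,
        Measure.addHaar_ball (μ := volume) _ hR, Measure.addHaar_ball (μ := volume) _ hρ, finrank_euclideanSpace_fin]
    · have hpre : Prod.mk t ⁻¹' slab d t₀ x₀ v₀ T R ρ = ∅ := by
        ext p; simp [slab, ht]
      rw [hpre, indicator_of_notMem ht, measure_empty]
  rw [lintegral_congr key, lintegral_indicator hT, setLIntegral_const]
  ring

lemma kinCyl_eq_slab (d : ℕ) (s : ℝ) (z₀ : Phase d) (r : ℝ) :
    kinCyl d s z₀ r =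
      slab d z₀.1 z₀.2.1 z₀.2.2 (Ioc (z₀.1 - r ^ (2 * s)) z₀.1) (r ^ (1 + 2 * s)) r := by
  ext z
  simp only [kinCyl, slab, mem_setOf_eq, mem_Ioc]
  tauto

lemma kinCyl_volume {d : ℕ} (hd : 1 ≤ d) (s : ℝ) (z₀ : Phase d) {r : ℝ} (hr : 0 < r) :
    volume (kinCyl d s z₀ r) =
      ENNReal.ofReal (r ^ (2 * s)) *
        (ENNReal.ofReal ((r ^ (1 + 2 * s)) ^ d) * volume (ball (0 : EuclideanSpace ℝ (Fin d)) 1))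
        * (ENNReal.ofReal (r ^ d) * volume (ball (0 : EuclideanSpace ℝ (Fin d)) 1)) := by
  rw [kinCyl_eq_slab,
    slab_volume hd _ _ _ measurableSet_Ioc (Real.rpow_pos_of_pos hr _).le hr.le,
    Real.volume_Ioc]
  ring_nf

lemma measurableSet_kinCyl {d : ℕ} (s : ℝ) (z₀ : Phase d) (r : ℝ) :
    MeasurableSet (kinCyl d s z₀ r) := by
  rw [kinCyl_eq_slab]; exact measurableSet_slab measurableSet_Ioc

lemma ball_vol_pos (d : ℕ) : 0 < volume (ball (0 : EuclideanSpace ℝ (Fin d)) 1) :=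
  measure_ball_pos volume 0 one_pos

lemma ball_vol_lt_top (d : ℕ) : volume (ball (0 : EuclideanSpace ℝ (Fin d)) 1) < ⊤ :=
  measure_ball_lt_top

lemma kinCyl_volume_pos {d : ℕ} (hd : 1 ≤ d) (s : ℝ) (z₀ : Phase d) {r : ℝ} (hr : 0 < r) :
    0 < volume (kinCyl d s z₀ r) := by
  rw [kinCyl_volume hd s z₀ hr]
  have h1 : (0:ℝ) < r ^ (2 * s) := Real.rpow_pos_of_pos hr _
  have h2 : (0:ℝ) < (r ^ (1 + 2 * s)) ^ d := pow_pos (Real.rpow_pos_of_pos hr _) d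
  have h3 : (0:ℝ) < r ^ d := pow_pos hr d
  rw [pos_iff_ne_zero]
  have h4 := (ball_vol_pos d).ne'
  exact mul_ne_zero (mul_ne_zero (ENNReal.ofReal_pos.mpr h1).ne'
    (mul_ne_zero (ENNReal.ofReal_pos.mpr h2).ne' h4))
    (mul_ne_zero (ENNReal.ofReal_pos.mpr h3).ne' h4)

lemma kinCyl_volume_lt_top {d : ℕ} (hd : 1 ≤ d) (s : ℝ) (z₀ : Phase d) {r : ℝ} (hr : 0 < r) :
    volume (kinCyl d s z₀ r) < ⊤ := by
  rw [kinCyl_volume hd s z₀ hr]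
  have h4 := (ball_vol_lt_top d).ne
  exact (ENNReal.mul_ne_top (ENNReal.mul_ne_top ENNReal.ofReal_ne_top
    (ENNReal.mul_ne_top ENNReal.ofReal_ne_top h4))
    (ENNReal.mul_ne_top ENNReal.ofReal_ne_top h4)).lt_top

lemma engulf {d : ℕ} {s : ℝ} (hs : s ∈ Set.Ioo (0:ℝ) 1) {r r' : ℝ} (hr : 0 < r) (hr' : 0 < r')
    (hle : r' ≤ 2 * r) {z₀ z₁ w z : Phase d}
    (hw1 : w ∈ kinCyl d s z₁ r') (hw0 : w ∈ kinCyl d s z₀ r) (hz : z ∈ kinCyl d s z₁ r') :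
    z ∈ slab d z₀.1 z₀.2.1 z₀.2.2 (Ioo (z₀.1 - 5 * r ^ (2*s)) (z₀.1 + 5 * r ^ (2*s)))
      (29 * r ^ (1 + 2*s)) (5 * r) := by
  obtain ⟨hs0, hs1⟩ := hs
  obtain ⟨hw1a, hw1b, hw1v, hw1x⟩ := hw1
  obtain ⟨hw0a, hw0b, hw0v, hw0x⟩ := hw0
  obtain ⟨hza, hzb, hzv, hzx⟩ := hz
  have h24 : (2:ℝ) ^ (2*s) ≤ 4 := by
    calc (2:ℝ) ^ (2*s) ≤ 2 ^ (2:ℝ) :=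
          Real.rpow_le_rpow_of_exponent_le one_le_two (by nlinarith)
      _ = 4 := by
          rw [show (2:ℝ) = ((2:ℕ):ℝ) by norm_num, Real.rpow_natCast]; norm_num
  have h28 : (2:ℝ) ^ (1 + 2*s) ≤ 8 := by
    calc (2:ℝ) ^ (1 + 2*s) ≤ 2 ^ (3:ℝ) :=
          Real.rpow_le_rpow_of_exponent_le one_le_two (by nlinarith)
      _ = 8 := by
          rw [show (3:ℝ) = ((3:ℕ):ℝ) by norm_num, Real.rpow_natCast]; norm_num
  have ha : r' ^ (2*s) ≤ 4 * r ^ (2*s) := by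
    calc r' ^ (2*s) ≤ (2*r) ^ (2*s) := Real.rpow_le_rpow hr'.le hle (by nlinarith)
      _ = 2 ^ (2*s) * r ^ (2*s) := Real.mul_rpow (by norm_num) hr.le
      _ ≤ 4 * r ^ (2*s) := by
          have := (Real.rpow_pos_of_pos hr (2*s)).le
          nlinarith
  have hb : r' ^ (1 + 2*s) ≤ 8 * r ^ (1 + 2*s) := by
    calc r' ^ (1 + 2*s) ≤ (2*r) ^ (1 + 2*s) := Real.rpow_le_rpow hr'.le hle (by nlinarith)
      _ = 2 ^ (1 + 2*s) * r ^ (1 + 2*s) := Real.mul_rpow (by norm_num) hr.le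
      _ ≤ 8 * r ^ (1 + 2*s) := by
          have := (Real.rpow_pos_of_pos hr (1 + 2*s)).le
          nlinarith
  have hrp : (0:ℝ) < r ^ (2*s) := Real.rpow_pos_of_pos hr _
  have hrp' : (0:ℝ) < r ^ (1 + 2*s) := Real.rpow_pos_of_pos hr _
  have hr'p : (0:ℝ) < r' ^ (2*s) := Real.rpow_pos_of_pos hr' _
  refine ⟨⟨by linarith, by linarith⟩, ?_, ?_⟩
  · -- velocity
    have h4 := dist_triangle4 z.2.2 z₁.2.2 w.2.2 z₀.2.2
    have hcm : dist z₁.2.2 w.2.2 = dist w.2.2 z₁.2.2 := dist_comm _ _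
    linarith
  · -- position
    set A := z.2.1 - z₁.2.1 - (z.1 - z₁.1) • z₁.2.2 with hA
    set B := w.2.1 - z₁.2.1 - (w.1 - z₁.1) • z₁.2.2 with hB
    set Cc := w.2.1 - z₀.2.1 - (w.1 - z₀.1) • z₀.2.2 with hC
    have hid : z.2.1 - z₀.2.1 - (z.1 - z₀.1) • z₀.2.2 =
        A - B + Cc + (z.1 - w.1) • (z₁.2.2 - z₀.2.2) := by
      rw [hA, hB, hC]
      module
    have htw : |z.1 - w.1| ≤ r' ^ (2*s) := abs_le.mpr ⟨by linarith, by linarith⟩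
    have hvv : ‖z₁.2.2 - z₀.2.2‖ ≤ 3 * r := by
      rw [← dist_eq_norm]
      have h4 := dist_triangle z₁.2.2 w.2.2 z₀.2.2
      have hcm : dist z₁.2.2 w.2.2 = dist w.2.2 z₁.2.2 := dist_comm _ _
      linarith
    have hsm : ‖(z.1 - w.1) • (z₁.2.2 - z₀.2.2)‖ ≤ (4 * r ^ (2*s)) * (3 * r) := by
      rw [norm_smul, Real.norm_eq_abs]
      exact mul_le_mul (le_trans htw ha) hvv (norm_nonneg _) (by positivity)
    have hmix : r ^ (2*s) * r = r ^ (1 + 2*s) := by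
      rw [Real.rpow_add hr, Real.rpow_one]; ring
    calc ‖z.2.1 - z₀.2.1 - (z.1 - z₀.1) • z₀.2.2‖
        = ‖A - B + Cc + (z.1 - w.1) • (z₁.2.2 - z₀.2.2)‖ := by rw [hid]
      _ ≤ ‖A - B + Cc‖ + ‖(z.1 - w.1) • (z₁.2.2 - z₀.2.2)‖ := norm_add_le _ _
      _ ≤ (‖A - B‖ + ‖Cc‖) + ‖(z.1 - w.1) • (z₁.2.2 - z₀.2.2)‖ := by
          have := norm_add_le (A - B) Cc; linarith
      _ ≤ ((‖A‖ + ‖B‖) + ‖Cc‖) + ‖(z.1 - w.1) • (z₁.2.2 - z₀.2.2)‖ := by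
          have := norm_sub_le A B; linarith
      _ < 29 * r ^ (1 + 2*s) := by nlinarith

lemma enlarged_volume {d : ℕ} (hd : 1 ≤ d) (s : ℝ) (z₀ : Phase d) {r : ℝ} (hr : 0 < r) :
    volume (slab d z₀.1 z₀.2.1 z₀.2.2 (Ioo (z₀.1 - 5 * r ^ (2*s)) (z₀.1 + 5 * r ^ (2*s)))
        (29 * r ^ (1 + 2*s)) (5 * r)) =
      ENNReal.ofReal (10 * 145 ^ d) * volume (kinCyl d s z₀ r) := by
  have hrp : (0:ℝ) < r ^ (2*s) := Real.rpow_pos_of_pos hr _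
  have hrp' : (0:ℝ) < r ^ (1 + 2*s) := Real.rpow_pos_of_pos hr _
  rw [slab_volume hd _ _ _ measurableSet_Ioo (by positivity) (by positivity), Real.volume_Ioo,
    kinCyl_volume hd s z₀ hr]
  have e1 : z₀.1 + 5 * r ^ (2*s) - (z₀.1 - 5 * r ^ (2*s)) = 10 * r ^ (2*s) := by ring
  have e2 : (145:ℝ) ^ d = 29 ^ d * 5 ^ d := by rw [← mul_pow]; norm_num
  rw [e1, mul_pow, mul_pow, ENNReal.ofReal_mul (by norm_num : (0:ℝ) ≤ 10),
    ENNReal.ofReal_mul (by positivity : (0:ℝ) ≤ (29:ℝ) ^ d),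
    ENNReal.ofReal_mul (by positivity : (0:ℝ) ≤ (5:ℝ) ^ d),
    ENNReal.ofReal_mul (by norm_num : (0:ℝ) ≤ 10), e2,
    ENNReal.ofReal_mul (by positivity : (0:ℝ) ≤ (29:ℝ) ^ d)]
  ring

lemma center_mem_kinCyl {d : ℕ} (s : ℝ) (z₀ : Phase d) {r : ℝ} (hr : 0 < r) :
    z₀ ∈ kinCyl d s z₀ r := by
  refine ⟨by have := Real.rpow_pos_of_pos hr (2*s); linarith, le_refl _, by simpa using hr, ?_⟩
  have : z₀.2.1 - z₀.2.1 - (z₀.1 - z₀.1) • z₀.2.2 = 0 := by simp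
  rw [this, norm_zero]
  exact Real.rpow_pos_of_pos hr _

/-- **Weak (1,1) maximal inequality for slanted kinetic cylinders.** There is a constant
`C > 0`, depending only on `d` and `s`, such that for every `f ∈ L¹` and `λ > 0`, the set
of points lying in some slanted kinetic cylinder on which the integral of `|f|` exceeds
`λ` times the measure of the cylinder has outer measure at most `(C / λ) ‖f‖_{L¹}`. -/
theorem kinCyl_maximal_inequality (d : ℕ) (hd : 1 ≤ d) (s : ℝ) (hs : s ∈ Set.Ioo (0 : ℝ) 1) :
    ∃ C : ℝ, 0 < C ∧
      ∀ (f : Phase d → ℝ), Integrable f volume → ∀ lam : ℝ, 0 < lam →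
        volume {z : Phase d | ∃ (z₀ : Phase d) (r : ℝ), 0 < r ∧ z ∈ kinCyl d s z₀ r ∧
            ENNReal.ofReal lam * volume (kinCyl d s z₀ r) <
              ∫⁻ ζ in kinCyl d s z₀ r, ENNReal.ofReal |f ζ|} ≤
          ENNReal.ofReal (C / lam) * ∫⁻ ζ, ENNReal.ofReal |f ζ| := by
  refine ⟨10 * 145 ^ d, by positivity, ?_⟩
  intro f hf lam hlam
  set I := ∫⁻ ζ, ENNReal.ofReal |f ζ| with hI
  set E := {z : Phase d | ∃ (z₀ : Phase d) (r : ℝ), 0 < r ∧ z ∈ kinCyl d s z₀ r ∧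
      ENNReal.ofReal lam * volume (kinCyl d s z₀ r) <
        ∫⁻ ζ in kinCyl d s z₀ r, ENNReal.ofReal |f ζ|} with hE
  by_cases hI0 : I = 0
  · have hEempty : E = ∅ := by
      rw [eq_empty_iff_forall_notMem]
      rintro z ⟨z₀, r, hr, -, hint⟩
      have h1 : (∫⁻ ζ in kinCyl d s z₀ r, ENNReal.ofReal |f ζ|) ≤ I :=
        setLIntegral_le_lintegral _ _
      exact (lt_of_lt_of_le hint (h1.trans (le_of_eq hI0))).not_ge zero_le
    rw [hEempty]
    simp
  by_cases hItop : I = ⊤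
  · have : ENNReal.ofReal ((10 * 145 ^ d) / lam) * I = ⊤ := by
      rw [hItop, ENNReal.mul_top]
      exact (ENNReal.ofReal_pos.mpr (by positivity)).ne'
    rw [this]; exact le_top
  -- main case
  have hs0 := hs.1
  set c := volume (ball (0 : EuclideanSpace ℝ (Fin d)) 1) with hc
  have hc0 : c ≠ 0 := (ball_vol_pos d).ne'
  have hctop : c ≠ ⊤ := (ball_vol_lt_top d).ne
  set t : Set (Phase d × ℝ) := {p | 0 < p.2 ∧
    ENNReal.ofReal lam * volume (kinCyl d s p.1 p.2) <
      ∫⁻ ζ in kinCyl d s p.1 p.2, ENNReal.ofReal |f ζ|} with ht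
  set B : Phase d × ℝ → Set (Phase d) := fun p => kinCyl d s p.1 p.2 with hBdef
  set K : ℝ := max 1 ((I / (c * c)).toReal / lam) with hK
  have hbound : ∀ p ∈ t, p.2 ≤ K := by
    rintro ⟨z₀, r⟩ ⟨hr, hint⟩
    show r ≤ K
    have hr : 0 < r := hr
    have hv : volume (kinCyl d s z₀ r)
        = ENNReal.ofReal (r ^ (2*s) * (r ^ (1+2*s)) ^ d * r ^ d) * (c * c) := by
      rw [kinCyl_volume hd s z₀ hr,
        ENNReal.ofReal_mul (by positivity : (0:ℝ) ≤ r ^ (2*s) * (r ^ (1+2*s)) ^ d),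
        ENNReal.ofReal_mul (by positivity : (0:ℝ) ≤ r ^ (2*s))]
      ring
    have h1 : ENNReal.ofReal lam *
        (ENNReal.ofReal (r ^ (2*s) * (r ^ (1+2*s)) ^ d * r ^ d) * (c*c)) ≤ I := by
      rw [← hv]
      exact le_trans (le_of_lt hint) (setLIntegral_le_lintegral _ _)
    have h2 : ENNReal.ofReal (lam * (r ^ (2*s) * (r ^ (1+2*s)) ^ d * r ^ d)) * (c*c) ≤ I := by
      rw [ENNReal.ofReal_mul hlam.le, mul_assoc]
      exact h1
    have h3 : ENNReal.ofReal (lam * (r ^ (2*s) * (r ^ (1+2*s)) ^ d * r ^ d)) ≤ I / (c * c) :=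
      (ENNReal.le_div_iff_mul_le (Or.inl (mul_ne_zero hc0 hc0))
        (Or.inl (ENNReal.mul_ne_top hctop hctop))).mpr h2
    have hfin : I / (c * c) ≠ ⊤ := (ENNReal.div_lt_top hItop (mul_ne_zero hc0 hc0)).ne
    have h4 : lam * (r ^ (2*s) * (r ^ (1+2*s)) ^ d * r ^ d) ≤ (I / (c*c)).toReal :=
      (ENNReal.ofReal_le_iff_le_toReal hfin).mp h3
    by_cases hr1 : r ≤ 1
    · exact le_trans hr1 (le_max_left _ _)
    · push_neg at hr1
      have h5 : 1 ≤ r ^ (2*s) := Real.one_le_rpow hr1.le (by linarith)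
      have h6 : 1 ≤ (r ^ (1+2*s)) ^ d := by
        have h6' : 1 ≤ r ^ (1+2*s) := Real.one_le_rpow hr1.le (by linarith)
        calc (1:ℝ) = 1 ^ d := (one_pow d).symm
          _ ≤ (r ^ (1+2*s)) ^ d := pow_le_pow_left₀ (by norm_num) h6' d
      have h7 : r ≤ r ^ d := le_self_pow₀ hr1.le (by omega)
      have hP : r ≤ r ^ (2*s) * (r ^ (1+2*s)) ^ d * r ^ d := by
        have hA : (1:ℝ) ≤ r ^ (2*s) * (r ^ (1+2*s)) ^ d := by nlinarith
        have hdp : (0:ℝ) < r ^ d := pow_pos hr d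
        nlinarith
      have h8 : r * lam ≤ (I / (c*c)).toReal := by
        have := mul_le_mul_of_nonneg_left hP hlam.le
        linarith
      refine le_trans ?_ (le_max_right 1 ((I / (c * c)).toReal / lam))
      rw [le_div_iff₀ hlam]
      exact h8
  obtain ⟨u, hut, hdisj, hcov⟩ := Vitali.exists_disjoint_subfamily_covering_enlargement
    B t (fun p => p.2) 2 one_lt_two (fun p hp => hp.1.le) K hbound
    (fun p hp => ⟨p.1, center_mem_kinCyl s p.1 hp.1⟩)
  have hpd : Pairwise (Function.onFun Disjoint fun i : ↥u => B i.1) := by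
    intro i j hij
    exact hdisj i.2 j.2 (fun hh => hij (Subtype.ext hh))
  haveI hcnt : Countable ↥u := by
    rw [← Set.countable_univ_iff]
    exact (Measure.countable_meas_pos_of_disjoint_iUnion (μ := volume)
      (As := fun i : ↥u => B i.1) (fun i => measurableSet_kinCyl s _ _) hpd).mono
      (fun i _ => kinCyl_volume_pos hd s i.1.1 (hut i.2).1)
  set Dset : ↥u → Set (Phase d) := fun i =>
    slab d i.1.1.1 i.1.1.2.1 i.1.1.2.2
      (Ioo (i.1.1.1 - 5 * i.1.2 ^ (2*s)) (i.1.1.1 + 5 * i.1.2 ^ (2*s)))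
      (29 * i.1.2 ^ (1 + 2*s)) (5 * i.1.2) with hDdef
  have hcover : E ⊆ ⋃ i : ↥u, Dset i := by
    rintro z ⟨z₀, r, hr, hzmem, hint⟩
    obtain ⟨b, hbu, hne, hrle⟩ := hcov (z₀, r) ⟨hr, hint⟩
    obtain ⟨w, hw1, hw0⟩ := hne
    have hrb : 0 < b.2 := (hut hbu).1
    exact mem_iUnion.mpr ⟨⟨b, hbu⟩, engulf hs hrb hr hrle hw1 hw0 hzmem⟩
  have hvol : ∀ i : ↥u, volume (Dset i) = ENNReal.ofReal (10 * 145 ^ d) * volume (B i.1) :=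
    fun i => enlarged_volume hd s i.1.1 (hut i.2).1
  have hsum : ∑' i : ↥u, (∫⁻ ζ in B i.1, ENNReal.ofReal |f ζ|) ≤ I := by
    rw [← lintegral_iUnion (fun i : ↥u => measurableSet_kinCyl s _ _) hpd]
    exact setLIntegral_le_lintegral _ _
  have hone : ∀ i : ↥u, volume (B i.1) ≤
      (∫⁻ ζ in B i.1, ENNReal.ofReal |f ζ|) / ENNReal.ofReal lam := by
    intro i
    rw [ENNReal.le_div_iff_mul_le (Or.inl (ENNReal.ofReal_pos.mpr hlam).ne')
      (Or.inl ENNReal.ofReal_ne_top), mul_comm]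
    exact (hut i.2).2.le
  calc volume E ≤ volume (⋃ i : ↥u, Dset i) := measure_mono hcover
    _ ≤ ∑' i : ↥u, volume (Dset i) := measure_iUnion_le _
    _ = ∑' i : ↥u, ENNReal.ofReal (10 * 145 ^ d) * volume (B i.1) := tsum_congr hvol
    _ = ENNReal.ofReal (10 * 145 ^ d) * ∑' i : ↥u, volume (B i.1) := ENNReal.tsum_mul_left
    _ ≤ ENNReal.ofReal (10 * 145 ^ d) *
        ∑' i : ↥u, (∫⁻ ζ in B i.1, ENNReal.ofReal |f ζ|) / ENNReal.ofReal lam :=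
      mul_le_mul_right (ENNReal.tsum_le_tsum hone) _
    _ = ENNReal.ofReal (10 * 145 ^ d) *
        ((∑' i : ↥u, ∫⁻ ζ in B i.1, ENNReal.ofReal |f ζ|) / ENNReal.ofReal lam) := by
      simp only [div_eq_mul_inv]
      rw [ENNReal.tsum_mul_right]
    _ ≤ ENNReal.ofReal (10 * 145 ^ d) * (I / ENNReal.ofReal lam) :=
      mul_le_mul_right (ENNReal.div_le_div_right hsum _) _
    _ = ENNReal.ofReal ((10 * 145 ^ d) / lam) * I := by
      rw [ENNReal.ofReal_div_of_pos hlam]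
      simp only [div_eq_mul_inv]
      ring
end
end

section
/- Lebesgue differentiation along slanted kinetic cylinders: let Ω ⊆ ℝ × ℝ^d × ℝ^d be open and f ∈ L¹(Ω). Then for almost every z = (t,x,v) ∈ Ω one has lim_{r→0⁺} (1/|Q_r(z)|) ∫_{Q_r(z)} |f(ζ) − f(z)| dζ = 0, where the averages are taken for all sufficiently small r > 0 (so that Q_r(z) ⊆ Ω). -/
open MeasureTheory Metric Set Filter
open scoped Topology ENNReal NNReal

noncomputable section

set_option synthInstance.maxHeartbeats 1000000 in
instance phaseBorel (d : ℕ) : BorelSpace (Phase d) := inferInstance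

set_option synthInstance.maxHeartbeats 1000000 in
instance phaseOpens (d : ℕ) : OpensMeasurableSpace (Phase d) := inferInstance

set_option synthInstance.maxHeartbeats 1000000 in
instance phaseSecond (d : ℕ) : SecondCountableTopology (Phase d) := inferInstance

instance phaseHaarEE (d : ℕ) : Measure.IsAddHaarMeasure
    (volume : Measure (EuclideanSpace ℝ (Fin d) × EuclideanSpace ℝ (Fin d))) :=
  Measure.prod.instIsAddHaarMeasure volume volume

instance phaseHaar (d : ℕ) : Measure.IsAddHaarMeasure (volume : Measure (Phase d)) :=
  Measure.prod.instIsAddHaarMeasure volume volume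

namespace KinCylAux

variable (d : ℕ) (s : ℝ)

/-- The closed kinetic cylinder. -/
def cylC (z₀ : Phase d) (ρ : ℝ) : Set (Phase d) :=
  {z | z₀.1 - ρ ^ (2 * s) ≤ z.1 ∧ z.1 ≤ z₀.1 ∧ dist z.2.2 z₀.2.2 ≤ ρ ∧
       ‖z.2.1 - z₀.2.1 - (z.1 - z₀.1) • z₀.2.2‖ ≤ ρ ^ (1 + 2 * s)}

/-- The two-sided closed kinetic cylinder (used as enlargement). -/
def cylT (z₀ : Phase d) (ρ : ℝ) : Set (Phase d) :=
  {z | |z.1 - z₀.1| ≤ ρ ^ (2 * s) ∧ dist z.2.2 z₀.2.2 ≤ ρ ∧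
       ‖z.2.1 - z₀.2.1 - (z.1 - z₀.1) • z₀.2.2‖ ≤ ρ ^ (1 + 2 * s)}

/-- Metric radius of a cylinder in the (max-)product metric. -/
def rad (z₀ : Phase d) (ρ : ℝ) : ℝ :=
  max (ρ ^ (2 * s)) (max (ρ ^ (1 + 2 * s) + ρ ^ (2 * s) * ‖z₀.2.2‖) ρ)

/-- The engulfing constant. -/
def cst (s : ℝ) : ℝ := max 29 (5 ^ (1 / (2 * s)))

/-- The measure-doubling constant. -/
def KC (d : ℕ) (s : ℝ) : ℝ≥0 :=
  (2 * cst s ^ (2 * s) * (cst s ^ (1 + 2 * s)) ^ d * cst s ^ d).toNNReal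

/-- The shear map adapted to the center `(t₀, ·, v₀)`. -/
def shear (t₀ : ℝ) (v₀ : EuclideanSpace ℝ (Fin d)) : Phase d → Phase d :=
  fun z => (z.1, z.2.1 - (z.1 - t₀) • v₀, z.2.2)

variable {d s}

lemma continuous_shear (t₀ : ℝ) (v₀ : EuclideanSpace ℝ (Fin d)) :
    Continuous (shear d t₀ v₀) := by
  unfold shear; fun_prop

lemma measurePreserving_shear (t₀ : ℝ) (v₀ : EuclideanSpace ℝ (Fin d)) :
    MeasurePreserving (shear d t₀ v₀) volume volume := by
  have hcoe : shear d t₀ v₀ = fun p : ℝ ×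
      (EuclideanSpace ℝ (Fin d) × EuclideanSpace ℝ (Fin d)) =>
        ((id p.1 : ℝ), p.2 - ((p.1 - t₀) • v₀, (0 : EuclideanSpace ℝ (Fin d)))) := by
    funext p
    simp [shear, Prod.ext_iff]
  rw [hcoe, show (volume : Measure (Phase d)) = Measure.prod volume volume from rfl]
  refine MeasurePreserving.skew_product
    (g := fun (a : ℝ) (q : EuclideanSpace ℝ (Fin d) × EuclideanSpace ℝ (Fin d)) =>
      q - ((a - t₀) • v₀, 0)) (MeasurePreserving.id _) ?_ ?_
  · fun_prop
  · exact ae_of_all _ fun a => (measurePreserving_sub_right volume _).map_eq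

lemma cylC_eq (z : Phase d) (ρ : ℝ) :
    cylC d s z ρ = shear d z.1 z.2.2 ⁻¹'
      (Icc (z.1 - ρ ^ (2 * s)) z.1 ×ˢ
        (closedBall z.2.1 (ρ ^ (1 + 2 * s)) ×ˢ closedBall z.2.2 ρ)) := by
  ext ζ
  simp only [cylC, shear, mem_setOf_eq, mem_preimage, mem_prod, mem_Icc, mem_closedBall,
    dist_eq_norm, sub_right_comm]
  constructor
  · rintro ⟨h1, h2, h3, h4⟩; exact ⟨⟨h1, h2⟩, h4, h3⟩
  · rintro ⟨⟨h1, h2⟩, h4, h3⟩; exact ⟨h1, h2, h3, h4⟩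

lemma kinCyl_eq (z : Phase d) (ρ : ℝ) :
    kinCyl d s z ρ = shear d z.1 z.2.2 ⁻¹'
      (Ioc (z.1 - ρ ^ (2 * s)) z.1 ×ˢ
        (ball z.2.1 (ρ ^ (1 + 2 * s)) ×ˢ ball z.2.2 ρ)) := by
  ext ζ
  simp only [kinCyl, shear, mem_setOf_eq, mem_preimage, mem_prod, mem_Ioc, mem_ball,
    dist_eq_norm, sub_right_comm]
  constructor
  · rintro ⟨h1, h2, h3, h4⟩; exact ⟨⟨h1, h2⟩, h4, h3⟩
  · rintro ⟨⟨h1, h2⟩, h4, h3⟩; exact ⟨h1, h2, h3, h4⟩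

lemma cylT_eq (z : Phase d) (ρ : ℝ) :
    cylT d s z ρ = shear d z.1 z.2.2 ⁻¹'
      (Icc (z.1 - ρ ^ (2 * s)) (z.1 + ρ ^ (2 * s)) ×ˢ
        (closedBall z.2.1 (ρ ^ (1 + 2 * s)) ×ˢ closedBall z.2.2 ρ)) := by
  ext ζ
  simp only [cylT, shear, mem_setOf_eq, mem_preimage, mem_prod, mem_Icc, mem_closedBall,
    dist_eq_norm, sub_right_comm, abs_le]
  constructor
  · rintro ⟨⟨h1, h2⟩, h3, h4⟩; exact ⟨⟨by linarith, by linarith⟩, h4, h3⟩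
  · rintro ⟨⟨h1, h2⟩, h4, h3⟩; exact ⟨⟨by linarith, by linarith⟩, h3, h4⟩

lemma isClosed_cylC (z : Phase d) (ρ : ℝ) : IsClosed (cylC d s z ρ) := by
  rw [cylC_eq]
  exact (isClosed_Icc.prod (isClosed_closedBall.prod isClosed_closedBall)).preimage
    (continuous_shear _ _)

lemma isClosed_cylT (z : Phase d) (ρ : ℝ) : IsClosed (cylT d s z ρ) := by
  rw [cylT_eq]
  exact (isClosed_Icc.prod (isClosed_closedBall.prod isClosed_closedBall)).preimage
    (continuous_shear _ _)

lemma measurableSet_kinCyl (z : Phase d) (ρ : ℝ) : MeasurableSet (kinCyl d s z ρ) := by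
  rw [kinCyl_eq]
  exact (measurableSet_Ioc.prod (measurableSet_ball.prod measurableSet_ball)).preimage
    (continuous_shear _ _).measurable

lemma kinCyl_subset_cylC (z : Phase d) (ρ : ℝ) : kinCyl d s z ρ ⊆ cylC d s z ρ := by
  rintro ζ ⟨h1, h2, h3, h4⟩
  exact ⟨h1.le, h2, h3.le, h4.le⟩

lemma vol_cylC (hd : 1 ≤ d) (z : Phase d) {ρ : ℝ} (hρ : 0 ≤ ρ) :
    volume (cylC d s z ρ) =
      ENNReal.ofReal (ρ ^ (2 * s) * (ρ ^ (1 + 2 * s)) ^ d * ρ ^ d) *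
        (volume (ball (0 : EuclideanSpace ℝ (Fin d)) 1) *
          volume (ball (0 : EuclideanSpace ℝ (Fin d)) 1)) := by
  haveI : Nonempty (Fin d) := ⟨⟨0, hd⟩⟩
  have hbox : MeasurableSet (Icc (z.1 - ρ ^ (2 * s)) z.1 ×ˢ
      (closedBall z.2.1 (ρ ^ (1 + 2 * s)) ×ˢ closedBall z.2.2 ρ)) :=
    measurableSet_Icc.prod (measurableSet_closedBall.prod measurableSet_closedBall)
  rw [cylC_eq, (measurePreserving_shear z.1 z.2.2).measure_preimage hbox.nullMeasurableSet,
    show (volume : Measure (Phase d)) = Measure.prod volume volume from rfl, Measure.prod_prod,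
    show (volume : Measure (EuclideanSpace ℝ (Fin d) × EuclideanSpace ℝ (Fin d)))
      = Measure.prod volume volume from rfl, Measure.prod_prod,
    Real.volume_Icc, Measure.addHaar_closedBall _ _ (Real.rpow_nonneg hρ _),
    Measure.addHaar_closedBall _ _ hρ, finrank_euclideanSpace_fin,
    show z.1 - (z.1 - ρ ^ (2 * s)) = ρ ^ (2 * s) by ring,
    ENNReal.ofReal_mul (by positivity), ENNReal.ofReal_mul (by positivity)]
  ring

lemma vol_kinCyl (hd : 1 ≤ d) (z : Phase d) {ρ : ℝ} (hρ : 0 ≤ ρ) :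
    volume (kinCyl d s z ρ) =
      ENNReal.ofReal (ρ ^ (2 * s) * (ρ ^ (1 + 2 * s)) ^ d * ρ ^ d) *
        (volume (ball (0 : EuclideanSpace ℝ (Fin d)) 1) *
          volume (ball (0 : EuclideanSpace ℝ (Fin d)) 1)) := by
  haveI : Nonempty (Fin d) := ⟨⟨0, hd⟩⟩
  have hbox : MeasurableSet (Ioc (z.1 - ρ ^ (2 * s)) z.1 ×ˢ
      (ball z.2.1 (ρ ^ (1 + 2 * s)) ×ˢ ball z.2.2 ρ)) :=
    measurableSet_Ioc.prod (measurableSet_ball.prod measurableSet_ball)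
  rw [kinCyl_eq, (measurePreserving_shear z.1 z.2.2).measure_preimage hbox.nullMeasurableSet,
    show (volume : Measure (Phase d)) = Measure.prod volume volume from rfl, Measure.prod_prod,
    show (volume : Measure (EuclideanSpace ℝ (Fin d) × EuclideanSpace ℝ (Fin d)))
      = Measure.prod volume volume from rfl, Measure.prod_prod,
    Real.volume_Ioc, Measure.addHaar_ball _ _ (Real.rpow_nonneg hρ _),
    Measure.addHaar_ball _ _ hρ, finrank_euclideanSpace_fin,
    show z.1 - (z.1 - ρ ^ (2 * s)) = ρ ^ (2 * s) by ring,
    ENNReal.ofReal_mul (by positivity), ENNReal.ofReal_mul (by positivity)]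
  ring

lemma vol_cylT (hd : 1 ≤ d) (z : Phase d) {ρ : ℝ} (hρ : 0 ≤ ρ) :
    volume (cylT d s z ρ) =
      ENNReal.ofReal (2 * (ρ ^ (2 * s) * (ρ ^ (1 + 2 * s)) ^ d * ρ ^ d)) *
        (volume (ball (0 : EuclideanSpace ℝ (Fin d)) 1) *
          volume (ball (0 : EuclideanSpace ℝ (Fin d)) 1)) := by
  haveI : Nonempty (Fin d) := ⟨⟨0, hd⟩⟩
  have hbox : MeasurableSet (Icc (z.1 - ρ ^ (2 * s)) (z.1 + ρ ^ (2 * s)) ×ˢ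
      (closedBall z.2.1 (ρ ^ (1 + 2 * s)) ×ˢ closedBall z.2.2 ρ)) :=
    measurableSet_Icc.prod (measurableSet_closedBall.prod measurableSet_closedBall)
  rw [cylT_eq, (measurePreserving_shear z.1 z.2.2).measure_preimage hbox.nullMeasurableSet,
    show (volume : Measure (Phase d)) = Measure.prod volume volume from rfl, Measure.prod_prod,
    show (volume : Measure (EuclideanSpace ℝ (Fin d) × EuclideanSpace ℝ (Fin d)))
      = Measure.prod volume volume from rfl, Measure.prod_prod,
    Real.volume_Icc, Measure.addHaar_closedBall _ _ (Real.rpow_nonneg hρ _),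
    Measure.addHaar_closedBall _ _ hρ, finrank_euclideanSpace_fin,
    show z.1 + ρ ^ (2 * s) - (z.1 - ρ ^ (2 * s)) = 2 * ρ ^ (2 * s) by ring,
    ENNReal.ofReal_mul (by positivity), ENNReal.ofReal_mul (by positivity),
    ENNReal.ofReal_mul (by positivity), ENNReal.ofReal_mul (by positivity)]
  ring

lemma vol_cylC_lt_top (hd : 1 ≤ d) (z : Phase d) {ρ : ℝ} (hρ : 0 ≤ ρ) :
    volume (cylC d s z ρ) < ∞ := by
  rw [vol_cylC hd z hρ]
  exact ENNReal.mul_lt_top ENNReal.ofReal_lt_top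
    (ENNReal.mul_lt_top measure_ball_lt_top measure_ball_lt_top)

lemma cst_pos : 0 < cst s :=
  lt_of_lt_of_le (by norm_num) (le_max_left _ _)

lemma vol_cylT_cst (hd : 1 ≤ d) (hs : 0 < s) (z : Phase d) {ρ : ℝ} (hρ : 0 ≤ ρ) :
    volume (cylT d s z (cst s * ρ)) ≤ (KC d s : ℝ≥0∞) * volume (cylC d s z ρ) := by
  have hc : (0 : ℝ) ≤ cst s := (cst_pos (s := s)).le
  have hKc : (KC d s : ℝ≥0∞) =
      ENNReal.ofReal (2 * cst s ^ (2 * s) * (cst s ^ (1 + 2 * s)) ^ d * cst s ^ d) := rfl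
  have hK0 : (0 : ℝ) ≤ 2 * cst s ^ (2 * s) * (cst s ^ (1 + 2 * s)) ^ d * cst s ^ d :=
    mul_nonneg (mul_nonneg (mul_nonneg (by norm_num) (Real.rpow_nonneg hc _))
      (pow_nonneg (Real.rpow_nonneg hc _) _)) (pow_nonneg hc _)
  have hreal : 2 * ((cst s * ρ) ^ (2 * s) * ((cst s * ρ) ^ (1 + 2 * s)) ^ d * (cst s * ρ) ^ d)
      = (2 * cst s ^ (2 * s) * (cst s ^ (1 + 2 * s)) ^ d * cst s ^ d)
        * (ρ ^ (2 * s) * (ρ ^ (1 + 2 * s)) ^ d * ρ ^ d) := by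
    rw [Real.mul_rpow hc hρ, Real.mul_rpow hc hρ, mul_pow, mul_pow]; ring
  rw [vol_cylT hd z (by positivity), vol_cylC hd z hρ, hKc, hreal,
    ENNReal.ofReal_mul hK0]
  exact le_of_eq (by ring)

lemma mem_cylC_self (hs : 0 < s) (z : Phase d) {ρ : ℝ} (hρ : 0 ≤ ρ) :
    z ∈ cylC d s z ρ := by
  refine ⟨by simp [Real.rpow_nonneg hρ], le_rfl, by simp [hρ], ?_⟩
  simp [Real.rpow_nonneg hρ]

lemma cylC_subset_closedBall (hs : 0 < s) (z : Phase d) {ρ : ℝ} (hρ : 0 ≤ ρ) :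
    cylC d s z ρ ⊆ closedBall z (rad d s z ρ) := by
  rintro ζ ⟨h1, h2, h3, h4⟩
  have ht : dist ζ.1 z.1 ≤ ρ ^ (2 * s) := by
    rw [Real.dist_eq]
    exact abs_le.2 ⟨by linarith, by linarith [Real.rpow_nonneg hρ (2 * s)]⟩
  have hx : dist ζ.2.1 z.2.1 ≤ ρ ^ (1 + 2 * s) + ρ ^ (2 * s) * ‖z.2.2‖ := by
    rw [dist_eq_norm, show ζ.2.1 - z.2.1 =
      (ζ.2.1 - z.2.1 - (ζ.1 - z.1) • z.2.2) + (ζ.1 - z.1) • z.2.2 by abel]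
    refine (norm_add_le _ _).trans (add_le_add h4 ?_)
    rw [norm_smul, Real.norm_eq_abs]
    have habs : |ζ.1 - z.1| ≤ ρ ^ (2 * s) :=
      abs_le.2 ⟨by linarith, by linarith [Real.rpow_nonneg hρ (2 * s)]⟩
    exact mul_le_mul_of_nonneg_right habs (norm_nonneg _)
  rw [mem_closedBall, Prod.dist_eq, Prod.dist_eq, rad]
  exact max_le_max ht (max_le_max hx h3)

lemma rad_mono (hs : 0 < s) (z : Phase d) {ρ₁ ρ₂ : ℝ} (h0 : 0 ≤ ρ₁) (h : ρ₁ ≤ ρ₂) :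
    rad d s z ρ₁ ≤ rad d s z ρ₂ := by
  have e1 : ρ₁ ^ (2 * s) ≤ ρ₂ ^ (2 * s) := Real.rpow_le_rpow h0 h (by linarith)
  have e2 : ρ₁ ^ (1 + 2 * s) ≤ ρ₂ ^ (1 + 2 * s) := Real.rpow_le_rpow h0 h (by linarith)
  exact max_le_max e1 (max_le_max
    (add_le_add e2 (mul_le_mul_of_nonneg_right e1 (norm_nonneg _))) h)

lemma tendsto_rpow_zero (c : ℝ) (hc : 0 < c) :
    Tendsto (fun ρ : ℝ => ρ ^ c) (𝓝[>] 0) (𝓝 0) := by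
  have h := (Real.continuousAt_rpow_const 0 c (Or.inr hc.le)).tendsto
  rw [Real.zero_rpow hc.ne'] at h
  exact h.mono_left nhdsWithin_le_nhds

lemma tendsto_rad (hs : 0 < s) (z : Phase d) :
    Tendsto (rad d s z) (𝓝[>] 0) (𝓝 0) := by
  have h1 := tendsto_rpow_zero (2 * s) (by linarith)
  have h2 := tendsto_rpow_zero (1 + 2 * s) (by linarith)
  have h3 : Tendsto (fun ρ : ℝ => ρ) (𝓝[>] 0) (𝓝 0) :=
    Filter.tendsto_id.mono_right nhdsWithin_le_nhds
  have H := h1.max ((h2.add (h1.mul_const ‖z.2.2‖)).max h3)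
  norm_num at H
  exact H

lemma exists_rad_le (hs : 0 < s) (z : Phase d) {ε : ℝ} (hε : 0 < ε) :
    ∃ ρ : ℝ, 0 < ρ ∧ ρ ≤ 1 ∧ rad d s z ρ ≤ ε := by
  have h1 := (tendsto_rad hs z).eventually (gt_mem_nhds hε)
  have h2 : Ioc (0 : ℝ) 1 ∈ 𝓝[>] (0 : ℝ) := Ioc_mem_nhdsGT_of_mem ⟨le_rfl, one_pos⟩
  obtain ⟨ρ, hrad, hmem⟩ := (h1.and h2).exists
  exact ⟨ρ, hmem.1, hmem.2, hrad.le⟩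

lemma interior_cylC_nonempty (hs : 0 < s) (z : Phase d) {ρ : ℝ} (hρ : 0 < ρ) :
    (interior (cylC d s z ρ)).Nonempty := by
  have hts : (0 : ℝ) < ρ ^ (2 * s) := Real.rpow_pos_of_pos hρ _
  refine ⟨(z.1 - ρ ^ (2 * s) / 2, z.2.1 - (ρ ^ (2 * s) / 2) • z.2.2, z.2.2), ?_⟩
  rw [mem_interior]
  refine ⟨{ζ : Phase d | z.1 - ρ ^ (2 * s) < ζ.1 ∧ ζ.1 < z.1 ∧ dist ζ.2.2 z.2.2 < ρ ∧
      ‖ζ.2.1 - z.2.1 - (ζ.1 - z.1) • z.2.2‖ < ρ ^ (1 + 2 * s)}, ?_, ?_, ?_⟩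
  · rintro ζ ⟨a1, a2, a3, a4⟩; exact ⟨a1.le, a2.le, a3.le, a4.le⟩
  · exact (isOpen_lt continuous_const continuous_fst).and ((isOpen_lt continuous_fst
      continuous_const).and ((isOpen_lt (by fun_prop) continuous_const).and
      (isOpen_lt (by fun_prop) continuous_const)))
  · refine ⟨by simp; linarith, by simp; linarith, by simp [hρ], ?_⟩
    have h0 : (z.2.1 - (ρ ^ (2 * s) / 2) • z.2.2) - z.2.1 -
        ((z.1 - ρ ^ (2 * s) / 2) - z.1) • z.2.2 = 0 := by
      have : (z.1 - ρ ^ (2 * s) / 2) - z.1 = -(ρ ^ (2 * s) / 2) := by ring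
      rw [this, neg_smul]; abel
    simp only [h0, norm_zero]
    exact Real.rpow_pos_of_pos hρ _

lemma engulf (hs : 0 < s) (hs1 : s < 1) {z₁ z₂ : Phase d} {ρ₁ ρ₂ : ℝ}
    (h1 : 0 ≤ ρ₁) (h2 : 0 < ρ₂) (hle : ρ₁ ≤ 2 * ρ₂)
    (hint : (cylC d s z₁ ρ₁ ∩ cylC d s z₂ ρ₂).Nonempty) :
    cylC d s z₁ ρ₁ ⊆ cylT d s z₂ (cst s * ρ₂) := by
  obtain ⟨w, ⟨wt1, wt1', wv1, wx1⟩, ⟨wt2, wt2', wv2, wx2⟩⟩ := hint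
  rintro ζ ⟨t1, t1', v1, x1⟩
  have hρ2 : (0 : ℝ) ≤ ρ₂ := h2.le
  have h2s0 : (0 : ℝ) ≤ 2 * s := by linarith
  have hc29 : (29 : ℝ) ≤ cst s := le_max_left _ _
  have hc0 : (0 : ℝ) < cst s := cst_pos
  have hc1 : (1 : ℝ) ≤ cst s := by linarith
  have hc5 : (5 : ℝ) ≤ cst s ^ (2 * s) := by
    have h5 : (5 : ℝ) ^ (1 / (2 * s)) ≤ cst s := le_max_right _ _
    have h5' := Real.rpow_le_rpow (by positivity) h5 h2s0
    rwa [← Real.rpow_mul (by norm_num : (0:ℝ) ≤ 5),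
      show 1 / (2 * s) * (2 * s) = 1 by field_simp, Real.rpow_one] at h5'
  have hc29' : (29 : ℝ) ≤ cst s ^ (1 + 2 * s) := by
    have := Real.rpow_le_rpow_of_exponent_le hc1 (by linarith : (1:ℝ) ≤ 1 + 2 * s)
    rw [Real.rpow_one] at this
    linarith
  have P0 : (0 : ℝ) ≤ ρ₂ ^ (2 * s) := Real.rpow_nonneg hρ2 _
  have P0' : (0 : ℝ) ≤ ρ₂ ^ (1 + 2 * s) := Real.rpow_nonneg hρ2 _
  have Q0 : (0 : ℝ) ≤ ρ₁ ^ (2 * s) := Real.rpow_nonneg h1 _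
  have e1 : ρ₁ ^ (2 * s) ≤ 4 * ρ₂ ^ (2 * s) := by
    have h4 : (2 : ℝ) ^ (2 * s) ≤ 4 := by
      have := Real.rpow_le_rpow_of_exponent_le one_le_two
        (by push_cast; linarith : 2 * s ≤ ((2:ℕ):ℝ))
      rwa [Real.rpow_natCast, show ((2:ℝ)^(2:ℕ)) = 4 by norm_num] at this
    calc ρ₁ ^ (2 * s) ≤ (2 * ρ₂) ^ (2 * s) := Real.rpow_le_rpow h1 hle h2s0
      _ = 2 ^ (2 * s) * ρ₂ ^ (2 * s) := Real.mul_rpow (by norm_num) hρ2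
      _ ≤ 4 * ρ₂ ^ (2 * s) := mul_le_mul_of_nonneg_right h4 P0
  have e2 : ρ₁ ^ (1 + 2 * s) ≤ 8 * ρ₂ ^ (1 + 2 * s) := by
    have h8 : (2 : ℝ) ^ (1 + 2 * s) ≤ 8 := by
      have := Real.rpow_le_rpow_of_exponent_le one_le_two
        (by push_cast; linarith : 1 + 2 * s ≤ ((3:ℕ):ℝ))
      rwa [Real.rpow_natCast, show ((2:ℝ)^(3:ℕ)) = 8 by norm_num] at this
    calc ρ₁ ^ (1 + 2 * s) ≤ (2 * ρ₂) ^ (1 + 2 * s) := Real.rpow_le_rpow h1 hle (by linarith)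
      _ = 2 ^ (1 + 2 * s) * ρ₂ ^ (1 + 2 * s) := Real.mul_rpow (by norm_num) hρ2
      _ ≤ 8 * ρ₂ ^ (1 + 2 * s) := mul_le_mul_of_nonneg_right h8 P0'
  have e3 : ρ₂ ^ (2 * s) * ρ₂ = ρ₂ ^ (1 + 2 * s) := by
    rw [Real.rpow_add h2, Real.rpow_one]; ring
  have htζw : |ζ.1 - w.1| ≤ ρ₁ ^ (2 * s) := abs_le.2 ⟨by linarith, by linarith⟩
  have htw2 : |w.1 - z₂.1| ≤ ρ₂ ^ (2 * s) := abs_le.2 ⟨by linarith, by linarith⟩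
  refine ⟨?_, ?_, ?_⟩
  · -- time
    rw [Real.mul_rpow hc0.le hρ2]
    calc |ζ.1 - z₂.1| ≤ |ζ.1 - w.1| + |w.1 - z₂.1| := abs_sub_le _ _ _
      _ ≤ 4 * ρ₂ ^ (2 * s) + ρ₂ ^ (2 * s) := by
          have := htζw.trans e1; linarith
      _ = 5 * ρ₂ ^ (2 * s) := by ring
      _ ≤ cst s ^ (2 * s) * ρ₂ ^ (2 * s) := mul_le_mul_of_nonneg_right hc5 P0
  · -- velocity
    calc dist ζ.2.2 z₂.2.2
        ≤ dist ζ.2.2 z₁.2.2 + dist z₁.2.2 w.2.2 + dist w.2.2 z₂.2.2 := dist_triangle4 _ _ _ _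
      _ ≤ ρ₁ + ρ₁ + ρ₂ := by
          rw [dist_comm z₁.2.2 w.2.2]; exact add_le_add (add_le_add v1 wv1) wv2
      _ ≤ 5 * ρ₂ := by linarith
      _ ≤ cst s * ρ₂ := mul_le_mul_of_nonneg_right (by linarith) hρ2
  · -- space
    have hvv : ‖z₁.2.2 - z₂.2.2‖ ≤ 3 * ρ₂ := by
      rw [← dist_eq_norm]
      calc dist z₁.2.2 z₂.2.2 ≤ dist z₁.2.2 w.2.2 + dist w.2.2 z₂.2.2 := dist_triangle _ _ _
        _ ≤ ρ₁ + ρ₂ := by rw [dist_comm z₁.2.2 w.2.2]; exact add_le_add wv1 wv2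
        _ ≤ 3 * ρ₂ := by linarith
    have key : ζ.2.1 - z₂.2.1 - (ζ.1 - z₂.1) • z₂.2.2 =
        (ζ.2.1 - z₁.2.1 - (ζ.1 - z₁.1) • z₁.2.2)
        - (w.2.1 - z₁.2.1 - (w.1 - z₁.1) • z₁.2.2)
        + (w.2.1 - z₂.2.1 - (w.1 - z₂.1) • z₂.2.2)
        + (ζ.1 - w.1) • (z₁.2.2 - z₂.2.2) := by module
    rw [Real.mul_rpow hc0.le hρ2, key]
    have hsmul : ‖(ζ.1 - w.1) • (z₁.2.2 - z₂.2.2)‖ ≤ (4 * ρ₂ ^ (2 * s)) * (3 * ρ₂) := by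
      rw [norm_smul, Real.norm_eq_abs]
      exact mul_le_mul (htζw.trans e1) hvv (norm_nonneg _) (by linarith)
    refine le_trans (norm_add_le _ _) ?_
    refine le_trans (add_le_add_left (norm_add_le _ _) _) ?_
    refine le_trans (add_le_add_left (add_le_add_left (norm_sub_le _ _) _) _) ?_
    calc ‖ζ.2.1 - z₁.2.1 - (ζ.1 - z₁.1) • z₁.2.2‖
          + ‖w.2.1 - z₁.2.1 - (w.1 - z₁.1) • z₁.2.2‖
          + ‖w.2.1 - z₂.2.1 - (w.1 - z₂.1) • z₂.2.2‖
          + ‖(ζ.1 - w.1) • (z₁.2.2 - z₂.2.2)‖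
        ≤ 8 * ρ₂ ^ (1 + 2 * s) + 8 * ρ₂ ^ (1 + 2 * s) + ρ₂ ^ (1 + 2 * s)
          + (4 * ρ₂ ^ (2 * s)) * (3 * ρ₂) :=
          add_le_add (add_le_add (add_le_add (x1.trans e2) (wx1.trans e2)) wx2) hsmul
      _ = 17 * ρ₂ ^ (1 + 2 * s) + 12 * (ρ₂ ^ (2 * s) * ρ₂) := by ring
      _ = 29 * ρ₂ ^ (1 + 2 * s) := by rw [e3]; ring
      _ ≤ cst s ^ (1 + 2 * s) * ρ₂ ^ (1 + 2 * s) := mul_le_mul_of_nonneg_right hc29' P0'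

end KinCylAux

open KinCylAux

/-- Generalized measurable Vitali covering theorem, with an abstract enlargement family
instead of metric balls. Adapted from `Vitali.exists_disjoint_covering_ae` in Mathlib. -/
theorem vitali_general {α ι : Type*} [PseudoMetricSpace α] [MeasurableSpace α]
    [OpensMeasurableSpace α] [SecondCountableTopology α] (μ : Measure α)
    [IsLocallyFiniteMeasure μ] (S : Set α) (t : Set ι)
    (C : ℝ≥0) (δ : ι → ℝ) (r : ι → ℝ) (c : ι → α) (B A : ι → Set α)
    (hB : ∀ a ∈ t, B a ⊆ closedBall (c a) (r a))
    (hc : ∀ a ∈ t, c a ∈ B a)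
    (δnn : ∀ a ∈ t, 0 ≤ δ a) (δ1 : ∀ a ∈ t, δ a ≤ 1)
    (μA : ∀ a ∈ t, μ (A a) ≤ C * μ (B a))
    (hE : ∀ a ∈ t, ∀ b ∈ t, (B a ∩ B b).Nonempty → δ a ≤ 2 * δ b → B a ⊆ A b)
    (ht : ∀ a ∈ t, (interior (B a)).Nonempty) (h't : ∀ a ∈ t, IsClosed (B a))
    (hf : ∀ x ∈ S, ∀ ε > (0 : ℝ), ∃ a ∈ t, r a ≤ ε ∧ c a = x) :
    ∃ u ⊆ t, u.Countable ∧ u.PairwiseDisjoint B ∧ μ (S \ ⋃ a ∈ u, B a) = 0 := by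
  classical
  have : ∀ x, ∃ R, 0 < R ∧ R ≤ 1 ∧ μ (closedBall x (20 * R)) < ∞ := fun x ↦ by
    refine ((eventually_le_nhds one_pos).and ?_).exists_gt
    refine (tendsto_closedBall_smallSets x).comp ?_ (μ.finiteAt_nhds x).eventually
    exact Continuous.tendsto' (by fun_prop) _ _ (mul_zero _)
  choose R hR0 hR1 hRμ using this
  let t' := { a ∈ t | r a ≤ R (c a) }
  obtain ⟨u, ut', u_disj, hu⟩ : ∃ u ⊆ t',
      u.PairwiseDisjoint B ∧ ∀ a ∈ t', ∃ b ∈ u, (B a ∩ B b).Nonempty ∧ δ a ≤ 2 * δ b := by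
    have A1 : ∀ a ∈ t', δ a ≤ 1 := fun a ha => δ1 a ha.1
    have A' : ∀ a ∈ t', (B a).Nonempty := fun a hat' => ⟨c a, hc a hat'.1⟩
    exact Vitali.exists_disjoint_subfamily_covering_enlargement B t' δ 2 one_lt_two
      (fun a ha => δnn a ha.1) 1 A1 A'
  have ut : u ⊆ t := fun a hau => (ut' hau).1
  have u_count : u.Countable := u_disj.countable_of_nonempty_interior fun a ha => ht a (ut ha)
  refine ⟨u, fun a hat' => (ut' hat').1, u_count, u_disj, ?_⟩
  refine measure_null_of_locally_null _ fun x _ => ?_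
  let v := { a ∈ u | (B a ∩ ball x (R x)).Nonempty }
  have vu : v ⊆ u := fun a ha => ha.1
  obtain ⟨K, μK, hK⟩ : ∃ K, μ (closedBall x K) < ∞ ∧
      ∀ a ∈ u, (B a ∩ ball x (R x)).Nonempty → B a ⊆ closedBall x K := by
    have Idist_v : ∀ a ∈ v, dist (c a) x ≤ r a + R x := by
      intro a hav
      apply dist_le_add_of_nonempty_closedBall_inter_closedBall
      refine hav.2.mono ?_
      apply inter_subset_inter _ ball_subset_closedBall
      exact hB a (ut (vu hav))
    set R0 := sSup (r '' v) with R0_def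
    have R0_bdd : BddAbove (r '' v) := by
      refine ⟨1, fun r' hr' => ?_⟩
      rcases (mem_image _ _ _).1 hr' with ⟨b, hb, rfl⟩
      exact le_trans (ut' (vu hb)).2 (hR1 (c b))
    rcases le_total R0 (R x) with (H | H)
    · refine ⟨20 * R x, hRμ x, fun a au hax => ?_⟩
      refine (hB a (ut au)).trans ?_
      apply closedBall_subset_closedBall'
      have : r a ≤ R0 := le_csSup R0_bdd (mem_image_of_mem _ ⟨au, hax⟩)
      linarith [Idist_v a ⟨au, hax⟩, hR0 x]
    · have R0pos : 0 < R0 := (hR0 x).trans_le H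
      have vnonempty : v.Nonempty := by
        by_contra h
        rw [nonempty_iff_ne_empty, Classical.not_not] at h
        rw [h, image_empty, Real.sSup_empty] at R0_def
        exact lt_irrefl _ (R0pos.trans_le (le_of_eq R0_def))
      obtain ⟨a, hav, R0a⟩ : ∃ a ∈ v, R0 / 2 < r a := by
        obtain ⟨r', r'mem, hr'⟩ : ∃ r' ∈ r '' v, R0 / 2 < r' :=
          exists_lt_of_lt_csSup (vnonempty.image _) (half_lt_self R0pos)
        rcases (mem_image _ _ _).1 r'mem with ⟨a, hav, rfl⟩
        exact ⟨a, hav, hr'⟩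
      refine ⟨8 * R0, ?_, ?_⟩
      · apply lt_of_le_of_lt (measure_mono _) (hRμ (c a))
        apply closedBall_subset_closedBall'
        rw [dist_comm]
        linarith [Idist_v a hav, (ut' (vu hav)).2]
      · intro b bu hbx
        refine (hB b (ut bu)).trans ?_
        apply closedBall_subset_closedBall'
        have : r b ≤ R0 := le_csSup R0_bdd (mem_image_of_mem _ ⟨bu, hbx⟩)
        linarith [Idist_v b ⟨bu, hbx⟩]
  refine ⟨_ ∩ ball x (R x), inter_mem_nhdsWithin _ (ball_mem_nhds _ (hR0 _)),
    nonpos_iff_eq_zero.mp (le_of_forall_gt_imp_ge_of_dense fun ε εpos => ?_)⟩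
  have I : (∑' a : v, μ (B a)) < ∞ := by
    calc
      (∑' a : v, μ (B a)) = μ (⋃ a ∈ v, B a) := by
        rw [measure_biUnion (u_count.mono vu) _ fun a ha => (h't _ (vu.trans ut ha)).measurableSet]
        exact u_disj.subset vu
      _ ≤ μ (closedBall x K) := (measure_mono (iUnion₂_subset fun a ha => hK a (vu ha) ha.2))
      _ < ∞ := μK
  obtain ⟨w, hw⟩ : ∃ w : Finset v, (∑' a : { a // a ∉ w }, μ (B a)) < ε / C :=
    haveI : 0 < ε / C := by
      simp only [ENNReal.div_pos_iff, εpos.ne', ENNReal.coe_ne_top, Ne, not_false_iff,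
        and_self_iff]
    ((tendsto_order.1 (ENNReal.tendsto_tsum_compl_atTop_zero I.ne)).2 _ this).exists
  have M : (S \ ⋃ a ∈ u, B a) ∩ ball x (R x) ⊆ ⋃ a : { a // a ∉ w }, A (a : ι) := by
    intro z hz
    set k := ⋃ (a : v) (_ : a ∈ w), B a
    have k_closed : IsClosed k := isClosed_biUnion_finset fun i _ => h't _ (ut (vu i.2))
    have z_notmem_k : z ∉ k := by
      simp only [k, not_exists, exists_prop, mem_iUnion, mem_sep_iff, forall_exists_index,
        SetCoe.exists, not_and, exists_and_right, Subtype.coe_mk]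
      intro b hbv _ h'z
      have : z ∈ (S \ ⋃ a ∈ u, B a) ∩ ⋃ a ∈ u, B a :=
        mem_inter (mem_of_mem_inter_left hz) (mem_biUnion (vu hbv) h'z)
      simpa only [diff_inter_self]
    have : ball x (R x) \ k ∈ 𝓝 z := by
      apply IsOpen.mem_nhds (isOpen_ball.sdiff k_closed) _
      exact (mem_diff _).2 ⟨mem_of_mem_inter_right hz, z_notmem_k⟩
    obtain ⟨e, epos, he⟩ : ∃ e, 0 < e ∧ closedBall z e ⊆ ball x (R x) \ k :=
      nhds_basis_closedBall.mem_iff.1 this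
    obtain ⟨a, hat, ad, rfl⟩ : ∃ a ∈ t, r a ≤ min e (R z) ∧ c a = z :=
      hf z ((mem_diff _).1 (mem_of_mem_inter_left hz)).1 (min e (R z)) (lt_min epos (hR0 z))
    have ax : B a ⊆ ball x (R x) := by
      refine (hB a hat).trans ?_
      refine Subset.trans ?_ (he.trans Set.diff_subset)
      exact closedBall_subset_closedBall (ad.trans (min_le_left _ _))
    obtain ⟨b, bu, ab, bdiam⟩ : ∃ b ∈ u, (B a ∩ B b).Nonempty ∧ δ a ≤ 2 * δ b :=
      hu a ⟨hat, ad.trans (min_le_right _ _)⟩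
    have bv : b ∈ v := by
      refine ⟨bu, ab.mono ?_⟩
      rw [inter_comm]
      exact inter_subset_inter_right _ ax
    let b' : v := ⟨b, bv⟩
    have b'_notmem_w : b' ∉ w := by
      intro b'w
      have b'k : B (b' : ι) ⊆ k := @Finset.subset_set_biUnion_of_mem _ _ _ (fun y : v => B y) _ b'w
      have : (ball x (R x) \ k ∩ k).Nonempty := by
        apply ab.mono (inter_subset_inter _ b'k)
        refine ((hB _ hat).trans ?_).trans he
        exact closedBall_subset_closedBall (ad.trans (min_le_left _ _))
      simpa only [diff_inter_self, Set.not_nonempty_empty]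
    let b'' : { a // a ∉ w } := ⟨b', b'_notmem_w⟩
    have zb : c a ∈ A b := hE a hat b (ut bu) ab bdiam (hc a hat)
    exact mem_iUnion.2 ⟨b'', zb⟩
  haveI : Countable v := (u_count.mono vu).to_subtype
  calc
    μ ((S \ ⋃ a ∈ u, B a) ∩ ball x (R x)) ≤ μ (⋃ a : { a // a ∉ w }, A (a : ι)) :=
      measure_mono M
    _ ≤ ∑' a : { a // a ∉ w }, μ (A (a : ι)) := measure_iUnion_le _
    _ ≤ ∑' a : { a // a ∉ w }, C * μ (B (a : ι)) :=
        ENNReal.tsum_le_tsum fun a => μA a (ut (vu a.1.2))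
    _ = C * ∑' a : { a // a ∉ w }, μ (B (a : ι)) := ENNReal.tsum_mul_left
    _ ≤ C * (ε / C) := by gcongr
    _ ≤ ε := ENNReal.mul_div_le

/-- The Vitali family of closed kinetic cylinders. -/
def kinVitali (d : ℕ) (hd : 1 ≤ d) (s : ℝ) (hs : s ∈ Set.Ioo (0 : ℝ) 1) :
    VitaliFamily (volume : Measure (Phase d)) where
  setsAt z := {a | ∃ ρ : ℝ, 0 < ρ ∧ ρ ≤ 1 ∧ a = cylC d s z ρ}
  measurableSet := by
    rintro x a ⟨ρ, -, -, rfl⟩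
    exact (isClosed_cylC x ρ).measurableSet
  nonempty_interior := by
    rintro x a ⟨ρ, hρ, -, rfl⟩
    exact interior_cylC_nonempty hs.1 x hρ
  nontrivial := by
    intro x ε hε
    obtain ⟨ρ, hρ0, hρ1, hrad⟩ := exists_rad_le hs.1 x hε
    exact ⟨cylC d s x ρ, ⟨ρ, hρ0, hρ1, rfl⟩,
      (cylC_subset_closedBall hs.1 x hρ0.le).trans (closedBall_subset_closedBall hrad)⟩
  covering := by
    intro S f fsub ffine
    set t : Set (ℝ × Phase d) :=
      {p | 0 < p.1 ∧ p.1 ≤ 1 ∧ cylC d s p.2 p.1 ∈ f p.2 ∧ p.2 ∈ S} with ht_def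
    have hfine : ∀ x ∈ S, ∀ ε > (0:ℝ), ∃ p ∈ t, rad d s p.2 p.1 ≤ ε ∧ p.2 = x := by
      intro x hx ε hε
      obtain ⟨ρ₀, hρ₀0, hρ₀1, hρ₀rad⟩ := exists_rad_le hs.1 x hε
      obtain ⟨a, haf, hasub⟩ := ffine x hx ρ₀ hρ₀0
      obtain ⟨ρ, hρ0, hρ1, rfl⟩ := fsub x hx haf
      have hρρ₀ : ρ ≤ ρ₀ := by
        set y : Phase d :=
          (x.1, x.2.1, x.2.2 + ρ • EuclideanSpace.single (⟨0, hd⟩ : Fin d) (1:ℝ)) with hy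
        have hmem : y ∈ cylC d s x ρ := by
          refine ⟨by simp [hy, Real.rpow_nonneg hρ0.le], by simp [hy], ?_, ?_⟩
          · simp [hy, dist_eq_norm, norm_smul, EuclideanSpace.norm_single,
              abs_of_nonneg hρ0.le]
          · simp [hy, Real.rpow_nonneg hρ0.le]
        have hd1 : dist y x = ρ := by
          rw [Prod.dist_eq, Prod.dist_eq]
          simp [hy, dist_eq_norm, norm_smul, EuclideanSpace.norm_single,
            abs_of_nonneg hρ0.le, max_eq_right hρ0.le]
        have := hasub hmem
        rw [mem_closedBall, hd1] at this
        exact this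
      exact ⟨(ρ, x), ⟨hρ0, hρ1, haf, hx⟩, (rad_mono hs.1 x hρ0.le hρρ₀).trans hρ₀rad, rfl⟩
    obtain ⟨u, hut, hcount, hdisj, hcov⟩ := vitali_general (volume : Measure (Phase d)) S t
      (KC d s) (fun p => p.1) (fun p => rad d s p.2 p.1) (fun p => p.2)
      (fun p => cylC d s p.2 p.1) (fun p => cylT d s p.2 (cst s * p.1))
      (fun p hp => cylC_subset_closedBall hs.1 p.2 hp.1.le)
      (fun p hp => mem_cylC_self hs.1 p.2 hp.1.le)
      (fun p hp => hp.1.le) (fun p hp => hp.2.1)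
      (fun p hp => vol_cylT_cst hd hs.1 p.2 hp.1.le)
      (fun p hp q hq hne hle => engulf hs.1 hs.2 hp.1.le hq.1 hle hne)
      (fun p hp => interior_cylC_nonempty hs.1 p.2 hp.1)
      (fun p _ => isClosed_cylC p.2 p.1)
      hfine
    refine ⟨(fun p : ℝ × Phase d => (p.2, cylC d s p.2 p.1)) '' u, ?_, ?_, ?_, ?_⟩
    · rintro q ⟨p, hp, rfl⟩; exact (hut hp).2.2.2
    · rintro q ⟨p, hp, rfl⟩ q' ⟨p', hp', rfl⟩ hqq'
      exact hdisj hp hp' (fun hpp' => hqq' (by rw [hpp']))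
    · rintro q ⟨p, hp, rfl⟩; exact (hut hp).2.2.1
    · convert hcov using 3
      rw [biUnion_image]

lemma tendsto_cylC_filterAt (d : ℕ) (hd : 1 ≤ d) (s : ℝ) (hs : s ∈ Set.Ioo (0 : ℝ) 1)
    (z : Phase d) :
    Tendsto (fun ρ : ℝ => cylC d s z ρ) (𝓝[>] 0) ((kinVitali d hd s hs).filterAt z) := by
  refine (VitaliFamily.tendsto_filterAt_iff _).2 ⟨?_, ?_⟩
  · filter_upwards [Ioc_mem_nhdsGT_of_mem (α := ℝ) ⟨le_rfl, one_pos⟩] with ρ hρ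
    exact ⟨ρ, hρ.1, hρ.2, rfl⟩
  · intro ε hε
    filter_upwards [(tendsto_rad hs.1 z).eventually (gt_mem_nhds hε),
      self_mem_nhdsWithin] with ρ h1 h2
    exact (cylC_subset_closedBall hs.1 z (le_of_lt h2)).trans
      (closedBall_subset_closedBall h1.le)

/-- **Lebesgue differentiation along slanted kinetic cylinders.** Let `Ω` be open and
`f ∈ L¹(Ω)`. For a.e. `z ∈ Ω`, the averages of `|f - f z|` over the slanted kinetic
cylinders `Q_r(z)` (which are contained in `Ω` for all sufficiently small `r > 0`)
converge to `0` as `r → 0⁺`. -/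
theorem kinCyl_lebesgue_differentiation (d : ℕ) (hd : 1 ≤ d) (s : ℝ)
    (hs : s ∈ Set.Ioo (0 : ℝ) 1) (Ω : Set (Phase d)) (hΩ : IsOpen Ω)
    (f : Phase d → ℝ) (hf : IntegrableOn f Ω volume) :
    ∀ᵐ z ∂(volume.restrict Ω),
      Tendsto (fun r : ℝ =>
          (volume (kinCyl d s z r))⁻¹ *
            ∫⁻ ζ in kinCyl d s z r ∩ Ω, ENNReal.ofReal |f ζ - f z|)
        (𝓝[>] 0) (𝓝 0) := by
  set g : Phase d → ℝ := Ω.indicator f with hg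
  have hgint : Integrable g volume := (integrable_indicator_iff hΩ.measurableSet).2 hf
  have H := (kinVitali d hd s hs).ae_tendsto_lintegral_enorm_sub_div
    hgint.locallyIntegrable
  have H' : ∀ᵐ z ∂(volume.restrict Ω),
      Tendsto (fun a => (∫⁻ y in a, ‖g y - g z‖₊ ∂volume) / volume a)
        ((kinVitali d hd s hs).filterAt z) (𝓝 0) :=
    H.filter_mono (ae_mono Measure.restrict_le_self)
  filter_upwards [H', ae_restrict_mem hΩ.measurableSet] with z hz hzΩ
  have T := hz.comp (tendsto_cylC_filterAt d hd s hs z)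
  refine Tendsto.congr' ?_ T
  obtain ⟨ε, hε0, hεΩ⟩ := Metric.isOpen_iff.1 hΩ z hzΩ
  filter_upwards [(tendsto_rad hs.1 z).eventually (gt_mem_nhds hε0),
    self_mem_nhdsWithin] with ρ hrad hρpos
  have hρ0 : (0:ℝ) < ρ := hρpos
  have hsubΩ : cylC d s z ρ ⊆ Ω :=
    (cylC_subset_closedBall hs.1 z hρ0.le).trans
      ((closedBall_subset_ball hrad).trans hεΩ)
  have hinter : kinCyl d s z ρ ∩ Ω = kinCyl d s z ρ :=
    inter_eq_left.2 ((kinCyl_subset_cylC z ρ).trans hsubΩ)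
  have hvol : volume (kinCyl d s z ρ) = volume (cylC d s z ρ) := by
    rw [vol_kinCyl hd z hρ0.le, vol_cylC hd z hρ0.le]
  have hfin : volume (kinCyl d s z ρ) ≠ ∞ := by
    rw [hvol]; exact (vol_cylC_lt_top hd z hρ0.le).ne
  have haediff : volume (cylC d s z ρ \ kinCyl d s z ρ) = 0 := by
    rw [measure_diff (kinCyl_subset_cylC z ρ)
      (measurableSet_kinCyl z ρ).nullMeasurableSet hfin, hvol, tsub_self]
  have hae : (kinCyl d s z ρ : Set (Phase d)) =ᵐ[volume] cylC d s z ρ := by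
    rw [MeasureTheory.ae_eq_set]
    constructor
    · rw [diff_eq_empty.2 (kinCyl_subset_cylC z ρ)]; exact measure_empty
    · exact haediff
  have hint2 : ∫⁻ ζ in kinCyl d s z ρ, ENNReal.ofReal |f ζ - f z|
      = ∫⁻ y in cylC d s z ρ, ‖g y - g z‖₊ := by
    rw [setLIntegral_congr hae]
    apply setLIntegral_congr_fun (isClosed_cylC z ρ).measurableSet
    intro y hy
    dsimp only
    rw [hg, indicator_of_mem (hsubΩ hy), indicator_of_mem hzΩ,
      ← Real.norm_eq_abs, ofReal_norm, enorm_eq_nnnorm]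
  simp only [Function.comp_apply]
  rw [hinter, hvol, hint2, ENNReal.div_eq_inv_mul]
end
end

section
/- Let m ≥ 1 and let {Q_{r_j}(z_j)}_{j∈ℕ} be a countable family of slanted kinetic cylinders. Then the Lebesgue measure of the union of the stacked cylinders satisfies |⋃_j Q̄^m(z_j, r_j)| ≥ (m/(m+1)) |⋃_j Q_{r_j}(z_j)|. -/
open MeasureTheory Metric Set

noncomputable section

/-- The stacked (time-delayed) cylinder `Q̄^m(z₀, r)` associated with `Q_r(z₀)`:
`{(t,x,v) : 0 < t - t₀ ≤ m r^{2s}, |v - v₀| < r, |x - x₀ - (t-t₀)v₀| < (m+2) r^{1+2s}}`. -/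
def kinCylStack (d : ℕ) (s m : ℝ) (z₀ : Phase d) (r : ℝ) : Set (Phase d) :=
  {z | 0 < z.1 - z₀.1 ∧ z.1 - z₀.1 ≤ m * r ^ (2 * s) ∧ dist z.2.2 z₀.2.2 < r ∧
       ‖z.2.1 - z₀.2.1 - (z.1 - z₀.1) • z₀.2.2‖ < (m + 2) * r ^ (1 + 2 * s)}

namespace KinStackAux

/-- An order-connected subset of `ℝ` of finite measure is bounded below. -/
lemma bddBelow_of_ordConnected {c : Set ℝ} (hc : c.OrdConnected)
    (hfin : volume c ≠ ⊤) : BddBelow c := by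
  rcases c.eq_empty_or_nonempty with rfl | ⟨x₀, hx₀⟩
  · exact bddBelow_empty
  by_contra h
  apply hfin
  apply ENNReal.eq_top_of_forall_nnreal_le
  intro p
  obtain ⟨z, hz, hzlt⟩ := not_bddBelow_iff.mp h (x₀ - p)
  have hsub : Icc z x₀ ⊆ c := hc.out hz hx₀
  calc (p : ENNReal) = ENNReal.ofReal (p : ℝ) := ENNReal.ofReal_coe_nnreal.symm
    _ ≤ ENNReal.ofReal (x₀ - z) := ENNReal.ofReal_le_ofReal (by linarith)
    _ = volume (Icc z x₀) := (Real.volume_Icc).symm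
    _ ≤ volume c := measure_mono hsub

/-- An order-connected subset of `ℝ` of finite measure is bounded above. -/
lemma bddAbove_of_ordConnected {c : Set ℝ} (hc : c.OrdConnected)
    (hfin : volume c ≠ ⊤) : BddAbove c := by
  rcases c.eq_empty_or_nonempty with rfl | ⟨x₀, hx₀⟩
  · exact bddAbove_empty
  by_contra h
  apply hfin
  apply ENNReal.eq_top_of_forall_nnreal_le
  intro p
  obtain ⟨z, hz, hzlt⟩ := not_bddAbove_iff.mp h (x₀ + p)
  have hsub : Icc x₀ z ⊆ c := hc.out hx₀ hz
  calc (p : ENNReal) = ENNReal.ofReal (p : ℝ) := ENNReal.ofReal_coe_nnreal.symm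
    _ ≤ ENNReal.ofReal (z - x₀) := ENNReal.ofReal_le_ofReal (by linarith)
    _ = volume (Icc x₀ z) := (Real.volume_Icc).symm
    _ ≤ volume c := measure_mono hsub

/-- **1D stacked intervals lemma.** -/
lemma oneD (m : ℝ) (hm : 1 ≤ m) (a b : ℕ → ℝ) (hab : ∀ j, a j < b j) (N : Set ℕ) :
    ENNReal.ofReal (m / (m + 1)) * volume (⋃ j ∈ N, Ioc (a j) (b j)) ≤
      volume (⋃ j ∈ N, Ioc (b j) (b j + m * (b j - a j))) := by
  have hm0 : 0 < m := lt_of_lt_of_le one_pos hm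
  set U : Set ℝ := ⋃ j ∈ N, Ioc (a j) (b j) with hUdef
  set G : Set ℝ := ⋃ j ∈ N, Ioo (b j) (b j + m * (b j - a j)) with hGdef
  have hGsub : G ⊆ ⋃ j ∈ N, Ioc (b j) (b j + m * (b j - a j)) :=
    Set.iUnion₂_mono fun j _ => Ioo_subset_Ioc_self
  refine le_trans ?_ (measure_mono hGsub)
  by_cases hG : volume G = ⊤
  · rw [hG]; exact le_top
  have hGopen : IsOpen G := isOpen_biUnion fun j _ => isOpen_Ioo
  have hlen : ∀ j, 0 < m * (b j - a j) := fun j => mul_pos hm0 (sub_pos.mpr (hab j))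
  set p : ℕ → ℝ := fun j => b j + m * (b j - a j) / 2 with hp
  have hpmemIoo : ∀ j, p j ∈ Ioo (b j) (b j + m * (b j - a j)) := by
    intro j
    constructor
    · simp only [hp]; nlinarith [hlen j]
    · simp only [hp]; nlinarith [hlen j]
  have hpmem : ∀ j ∈ N, p j ∈ G := fun j hj => mem_biUnion hj (hpmemIoo j)
  set C : ℕ → Set ℝ := fun j => connectedComponentIn G (p j) with hC
  have hJC : ∀ j ∈ N, Ioo (b j) (b j + m * (b j - a j)) ⊆ C j := fun j hj =>
    isPreconnected_Ioo.subset_connectedComponentIn (hpmemIoo j)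
      (fun t ht => mem_biUnion hj ht)
  have hCG : ∀ j, C j ⊆ G := fun j => connectedComponentIn_subset _ _
  have hCopen : ∀ j, IsOpen (C j) := fun j => hGopen.connectedComponentIn
  have hCord : ∀ j, (C j).OrdConnected := fun j =>
    (isPreconnected_connectedComponentIn).ordConnected
  have hCfin : ∀ j, volume (C j) ≠ ⊤ := by
    intro j h
    exact hG (top_le_iff.mp (h ▸ measure_mono (hCG j)))
  have hCbb : ∀ j, BddBelow (C j) := fun j => bddBelow_of_ordConnected (hCord j) (hCfin j)
  have hCba : ∀ j, BddAbove (C j) := fun j => bddAbove_of_ordConnected (hCord j) (hCfin j)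
  set α : ℕ → ℝ := fun j => sInf (C j) with hα
  set β : ℕ → ℝ := fun j => sSup (C j) with hβ
  have hIoone : ∀ j, (Ioo (b j) (b j + m * (b j - a j))).Nonempty :=
    fun j => ⟨p j, hpmemIoo j⟩
  have hαb : ∀ j ∈ N, α j ≤ b j := by
    intro j hj
    calc α j ≤ sInf (Ioo (b j) (b j + m * (b j - a j))) :=
          csInf_le_csInf (hCbb j) (hIoone j) (hJC j hj)
      _ = b j := csInf_Ioo (by nlinarith [hlen j])
  have hβb : ∀ j ∈ N, b j + m * (b j - a j) ≤ β j := by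
    intro j hj
    calc b j + m * (b j - a j) = sSup (Ioo (b j) (b j + m * (b j - a j))) :=
          (csSup_Ioo (by nlinarith [hlen j])).symm
      _ ≤ β j := csSup_le_csSup (hCba j) (hIoone j) (hJC j hj)
  have hCne : ∀ j ∈ N, (C j).Nonempty := by
    intro j hj
    exact ⟨p j, mem_connectedComponentIn (hpmem j hj)⟩
  have hIoosub : ∀ j ∈ N, Ioo (α j) (β j) ⊆ C j := by
    intro j hj x hx
    obtain ⟨u, hu, hux⟩ := exists_lt_of_csInf_lt (hCne j hj) hx.1
    obtain ⟨w, hw, hxw⟩ := exists_lt_of_lt_csSup (hCne j hj) hx.2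
    exact (hCord j).out hu hw ⟨le_of_lt hux, le_of_lt hxw⟩
  -- covering of U \ G by left shadows of components
  have hcover : U \ G ⊆ ⋃ j ∈ N, Ioc (α j - (β j - α j) / m) (α j) := by
    rintro x ⟨hxU, hxG⟩
    obtain ⟨j, hj, hx⟩ := mem_iUnion₂.mp hxU
    refine mem_biUnion hj ?_
    have h1 : x ≤ α j := by
      by_contra hlt
      push_neg at hlt
      have hxβ : x < β j := by
        have := hβb j hj
        have := hlen j
        have := hx.2
        linarith
      exact hxG (hCG j (hIoosub j hj ⟨hlt, hxβ⟩))
    have hml : m * (b j - a j) ≤ β j - α j := by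
      have := hαb j hj; have := hβb j hj; linarith
    have hle : b j - a j ≤ (β j - α j) / m := by
      rw [le_div_iff₀ hm0]; linarith
    have h2 : α j - (β j - α j) / m < x := by
      have := hαb j hj
      have := hx.1
      linarith
    exact ⟨h2, h1⟩
  -- measure of the shadow union
  have hcnt : (C '' N).Countable := (N.to_countable).image C
  have hdisj : (C '' N).PairwiseDisjoint id := by
    rintro c₁ ⟨j₁, hj₁, rfl⟩ c₂ ⟨j₂, hj₂, rfl⟩ hne
    rw [Function.onFun, Set.disjoint_left]
    intro x hx₁ hx₂
    exact hne ((connectedComponentIn_eq hx₁).trans (connectedComponentIn_eq hx₂).symm)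
  set L : Set ℝ → Set ℝ := fun c => Ioc (sInf c - (sSup c - sInf c) / m) (sInf c) with hL
  have himg : (⋃ j ∈ N, Ioc (α j - (β j - α j) / m) (α j)) = ⋃ c ∈ C '' N, L c := by
    rw [biUnion_image]
  have hshadow : volume (U \ G) ≤ ENNReal.ofReal (1 / m) * volume G := by
    refine le_trans (measure_mono hcover) ?_
    rw [himg]
    refine le_trans (measure_biUnion_le volume hcnt L) ?_
    have hterm : ∀ c : ↥(C '' N),
        volume (L (c : Set ℝ)) ≤ ENNReal.ofReal (1 / m) * volume (c : Set ℝ) := by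
      rintro ⟨c, j, hj, rfl⟩
      have hαβ : α j ≤ β j := le_of_lt (lt_of_le_of_lt (hαb j hj)
        (lt_of_lt_of_le (by nlinarith [hlen j]) (hβb j hj)))
      have : volume (L (C j)) = ENNReal.ofReal ((β j - α j) / m) := by
        rw [hL]
        simp only
        rw [Real.volume_Ioc]
        congr 1
        ring
      rw [this]
      have h1 : (β j - α j) / m = (1 / m) * (β j - α j) := by ring
      rw [h1, ENNReal.ofReal_mul (by positivity)]
      refine mul_le_mul_right ?_ _
      calc ENNReal.ofReal (β j - α j) = volume (Ioo (α j) (β j)) := (Real.volume_Ioo).symm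
        _ ≤ volume (C j) := measure_mono (hIoosub j hj)
    refine le_trans (ENNReal.tsum_le_tsum hterm) ?_
    rw [ENNReal.tsum_mul_left]
    refine mul_le_mul_right ?_ _
    have heq : volume (⋃ c ∈ C '' N, (c : Set ℝ)) = ∑' (i : ↥(C '' N)), volume (i : Set ℝ) :=
      measure_biUnion hcnt hdisj
        (fun c hc => by obtain ⟨j, hj, rfl⟩ := hc; exact (hCopen j).measurableSet)
    rw [← heq]
    refine measure_mono (iUnion₂_subset ?_)
    rintro c ⟨j, hj, rfl⟩
    exact hCG j
  -- put it together
  have hUle : volume U ≤ ENNReal.ofReal (1 + 1 / m) * volume G := by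
    have h1 : volume U ≤ volume G + volume (U \ G) := by
      refine le_trans (measure_mono ?_) (measure_union_le G (U \ G))
      intro x hx
      by_cases hxG : x ∈ G
      · exact Or.inl hxG
      · exact Or.inr ⟨hx, hxG⟩
    have h2 : ENNReal.ofReal (1 + 1 / m) * volume G
        = volume G + ENNReal.ofReal (1 / m) * volume G := by
      rw [ENNReal.ofReal_add (by norm_num) (by positivity), add_mul,
        ENNReal.ofReal_one, one_mul]
    rw [h2]
    exact le_trans h1 (add_le_add le_rfl hshadow)
  calc ENNReal.ofReal (m / (m + 1)) * volume U
      ≤ ENNReal.ofReal (m / (m + 1)) * (ENNReal.ofReal (1 + 1 / m) * volume G) :=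
        mul_le_mul_right hUle _
    _ = (ENNReal.ofReal (m / (m + 1)) * ENNReal.ofReal (1 + 1 / m)) * volume G := by
        rw [mul_assoc]
    _ = volume G := by
        rw [← ENNReal.ofReal_mul (by positivity)]
        have : m / (m + 1) * (1 + 1 / m) = 1 := by field_simp
        rw [this, ENNReal.ofReal_one, one_mul]


/-- Per-trajectory slice inequality: along each free-transport trajectory
`t ↦ (t, y + t v, v)`, the time slice of the union of stacked cylinders has measure
at least `m/(m+1)` times that of the union of the cylinders. -/
lemma slice_le (d : ℕ) (s m : ℝ) (hm : 1 ≤ m)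
    (z : ℕ → Phase d) (r : ℕ → ℝ) (hr : ∀ j, 0 < r j)
    (y v : EuclideanSpace ℝ (Fin d)) :
    ENNReal.ofReal (m / (m + 1)) *
        volume {t : ℝ | (t, y + t • v, v) ∈ ⋃ j, kinCyl d s (z j) (r j)} ≤
      volume {t : ℝ | (t, y + t • v, v) ∈ ⋃ j, kinCylStack d s m (z j) (r j)} := by
  classical
  set N : Set ℕ := {j | ∃ t : ℝ, (t, y + t • v, v) ∈ kinCyl d s (z j) (r j)} with hN
  set a : ℕ → ℝ := fun j => (z j).1 - (r j) ^ (2 * s) with ha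
  set b : ℕ → ℝ := fun j => (z j).1 with hb
  have hρpos : ∀ j, 0 < (r j) ^ (2 * s) := fun j => Real.rpow_pos_of_pos (hr j) _
  have hab : ∀ j, a j < b j := by
    intro j
    have := hρpos j
    simp only [ha, hb]
    linarith
  have hρ : ∀ j, b j - a j = (r j) ^ (2 * s) := by
    intro j; simp only [ha, hb]; ring
  have h1 : {t : ℝ | (t, y + t • v, v) ∈ ⋃ j, kinCyl d s (z j) (r j)} ⊆
      ⋃ j ∈ N, Ioc (a j) (b j) := by
    intro t ht
    rw [mem_setOf_eq, mem_iUnion] at ht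
    obtain ⟨j, hj⟩ := ht
    have hjN : j ∈ N := ⟨t, hj⟩
    obtain ⟨hj1, hj2, -, -⟩ := hj
    exact mem_biUnion hjN ⟨hj1, hj2⟩
  have h2 : (⋃ j ∈ N, Ioc (b j) (b j + m * (b j - a j))) ⊆
      {t : ℝ | (t, y + t • v, v) ∈ ⋃ j, kinCylStack d s m (z j) (r j)} := by
    intro t ht
    obtain ⟨j, hj, htj⟩ := mem_iUnion₂.mp ht
    obtain ⟨t₀, h₀1, h₀2, h₀3, h₀4⟩ := hj
    rw [mem_setOf_eq, mem_iUnion]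
    refine ⟨j, ?_, ?_, ?_, ?_⟩
    · have := htj.1; simp only [hb] at this ⊢; linarith
    · have := htj.2; rw [hρ j] at this; simp only [hb] at this ⊢; linarith
    · exact h₀3
    · -- the norm bound
      have hdecomp : (y + t • v) - (z j).2.1 - (t - (z j).1) • (z j).2.2
          = ((y + t₀ • v) - (z j).2.1 - (t₀ - (z j).1) • (z j).2.2)
            + (t - t₀) • (v - (z j).2.2) := by
        module
      have htt0 : 0 ≤ t - t₀ := by
        have := htj.1; simp only [hb] at this; linarith
      have htt1 : t - t₀ ≤ (m + 1) * (r j) ^ (2 * s) := by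
        have h5 := htj.2
        rw [hρ j] at h5
        simp only [hb] at h5
        simp only [ha, hb] at h₀1
        linarith
      have hnv : ‖v - (z j).2.2‖ ≤ r j := by
        rw [← dist_eq_norm]; exact le_of_lt h₀3
      have hsmul : ‖(t - t₀) • (v - (z j).2.2)‖ ≤ (m + 1) * (r j) ^ (2 * s) * r j := by
        rw [norm_smul, Real.norm_eq_abs, abs_of_nonneg htt0]
        exact mul_le_mul htt1 hnv (norm_nonneg _)
          (mul_nonneg (by linarith) (le_of_lt (hρpos j)))
      have hpow : (r j) ^ (1 + 2 * s) = r j * (r j) ^ (2 * s) := by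
        rw [Real.rpow_add (hr j), Real.rpow_one]
      calc ‖(y + t • v) - (z j).2.1 - (t - (z j).1) • (z j).2.2‖
          ≤ ‖(y + t₀ • v) - (z j).2.1 - (t₀ - (z j).1) • (z j).2.2‖
            + ‖(t - t₀) • (v - (z j).2.2)‖ := by rw [hdecomp]; exact norm_add_le _ _
        _ < (r j) ^ (1 + 2 * s) + (m + 1) * (r j) ^ (2 * s) * r j :=
            add_lt_add_of_lt_of_le h₀4 hsmul
        _ = (m + 2) * (r j) ^ (1 + 2 * s) := by rw [hpow]; ring
  calc ENNReal.ofReal (m / (m + 1)) *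
        volume {t : ℝ | (t, y + t • v, v) ∈ ⋃ j, kinCyl d s (z j) (r j)}
      ≤ ENNReal.ofReal (m / (m + 1)) * volume (⋃ j ∈ N, Ioc (a j) (b j)) :=
        mul_le_mul_right (measure_mono h1) _
    _ ≤ volume (⋃ j ∈ N, Ioc (b j) (b j + m * (b j - a j))) := oneD m hm a b hab N
    _ ≤ volume {t : ℝ | (t, y + t • v, v) ∈ ⋃ j, kinCylStack d s m (z j) (r j)} :=
        measure_mono h2

/-- The kinetic shear `(t, y, v) ↦ (t, y + t v, v)` preserves Lebesgue measure. -/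
lemma shear_measurePreserving (d : ℕ) :
    MeasurePreserving
      (fun p : ℝ × (EuclideanSpace ℝ (Fin d) × EuclideanSpace ℝ (Fin d)) =>
        (p.1, (p.2.1 + p.1 • p.2.2, p.2.2)))
      volume volume := by
  set X := EuclideanSpace ℝ (Fin d)
  have hfiber : ∀ t : ℝ,
      MeasurePreserving (fun w : X × X => (w.1 + t • w.2, w.2)) volume volume := by
    intro t
    have hgm0 : Measurable (Function.uncurry fun (q : X) (y : X) => y + t • q) :=
      measurable_snd.add (measurable_fst.const_smul t)
    have hg0 : ∀ᵐ q ∂(volume : Measure X),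
        Measure.map (fun y : X => y + t • q) volume = volume :=
      Filter.Eventually.of_forall fun q => (measurePreserving_add_right volume (t • q)).map_eq
    have h1 : MeasurePreserving (fun q : X × X => (q.1, q.2 + t • q.1))
        ((volume : Measure X).prod volume) ((volume : Measure X).prod volume) :=
      (MeasurePreserving.id (volume : Measure X)).skew_product hgm0 hg0
    have h1' : MeasurePreserving (fun q : X × X => (q.1, q.2 + t • q.1))
        (volume : Measure (X × X)) (volume : Measure (X × X)) := by
      rwa [Measure.volume_eq_prod]
    have hswap : MeasurePreserving (Prod.swap : X × X → X × X)
        (volume : Measure (X × X)) (volume : Measure (X × X)) := by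
      rw [Measure.volume_eq_prod]; exact Measure.measurePreserving_swap
    have hcomp := (hswap.comp h1').comp hswap
    convert hcomp using 1
    rfl
  have hgm : Measurable fun p : ℝ × (X × X) => (p.2.1 + p.1 • p.2.2, p.2.2) := by
    refine Measurable.prodMk ?_ measurable_snd.snd
    exact measurable_snd.fst.add (measurable_fst.smul measurable_snd.snd)
  have h := (MeasurePreserving.id (volume : Measure ℝ)).skew_product
    (g := fun t (w : X × X) => (w.1 + t • w.2, w.2)) hgm
    (Filter.Eventually.of_forall fun t => (hfiber t).map_eq)
  rwa [Measure.volume_eq_prod]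

lemma kinCyl_measurableSet (d : ℕ) (s : ℝ) (z₀ : Phase d) (r : ℝ) :
    MeasurableSet (kinCyl d s z₀ r) := by
  have h1 : IsOpen {w : Phase d | z₀.1 - r ^ (2 * s) < w.1} :=
    isOpen_lt continuous_const continuous_fst
  have h2 : IsClosed {w : Phase d | w.1 ≤ z₀.1} :=
    isClosed_le continuous_fst continuous_const
  have h3 : IsOpen {w : Phase d | dist w.2.2 z₀.2.2 < r} :=
    isOpen_lt ((continuous_snd.snd).dist continuous_const) continuous_const
  have h4 : IsOpen {w : Phase d | ‖w.2.1 - z₀.2.1 - (w.1 - z₀.1) • z₀.2.2‖ < r ^ (1 + 2 * s)} :=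
    isOpen_lt (Continuous.norm (((continuous_snd.fst).sub continuous_const).sub
      (((continuous_fst).sub continuous_const).smul continuous_const))) continuous_const
  have : kinCyl d s z₀ r = {w : Phase d | z₀.1 - r ^ (2 * s) < w.1} ∩
      ({w : Phase d | w.1 ≤ z₀.1} ∩ ({w : Phase d | dist w.2.2 z₀.2.2 < r} ∩
        {w : Phase d | ‖w.2.1 - z₀.2.1 - (w.1 - z₀.1) • z₀.2.2‖ < r ^ (1 + 2 * s)})) := by
    ext w; simp [kinCyl, mem_setOf_eq, and_assoc]
  rw [this]
  exact h1.measurableSet.inter (h2.measurableSet.inter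
    (h3.measurableSet.inter h4.measurableSet))

lemma kinCylStack_measurableSet (d : ℕ) (s m : ℝ) (z₀ : Phase d) (r : ℝ) :
    MeasurableSet (kinCylStack d s m z₀ r) := by
  have h1 : IsOpen {w : Phase d | 0 < w.1 - z₀.1} :=
    isOpen_lt continuous_const (continuous_fst.sub continuous_const)
  have h2 : IsClosed {w : Phase d | w.1 - z₀.1 ≤ m * r ^ (2 * s)} :=
    isClosed_le (continuous_fst.sub continuous_const) continuous_const
  have h3 : IsOpen {w : Phase d | dist w.2.2 z₀.2.2 < r} :=
    isOpen_lt ((continuous_snd.snd).dist continuous_const) continuous_const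
  have h4 : IsOpen
      {w : Phase d | ‖w.2.1 - z₀.2.1 - (w.1 - z₀.1) • z₀.2.2‖ < (m + 2) * r ^ (1 + 2 * s)} :=
    isOpen_lt (Continuous.norm (((continuous_snd.fst).sub continuous_const).sub
      (((continuous_fst).sub continuous_const).smul continuous_const))) continuous_const
  have : kinCylStack d s m z₀ r = {w : Phase d | 0 < w.1 - z₀.1} ∩
      ({w : Phase d | w.1 - z₀.1 ≤ m * r ^ (2 * s)} ∩ ({w : Phase d | dist w.2.2 z₀.2.2 < r} ∩
        {w : Phase d | ‖w.2.1 - z₀.2.1 - (w.1 - z₀.1) • z₀.2.2‖ < (m + 2) * r ^ (1 + 2 * s)})) := by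
    ext w; simp [kinCylStack, mem_setOf_eq, and_assoc]
  rw [this]
  exact h1.measurableSet.inter (h2.measurableSet.inter
    (h3.measurableSet.inter h4.measurableSet))

end KinStackAux

/-- **Measure of the union of stacked cylinders.** For a countable family of slanted
kinetic cylinders, the union of the associated stacked cylinders has measure at least
`m / (m+1)` times the measure of the union of the original cylinders. -/
theorem kinCylStack_union_measure (d : ℕ) (hd : 1 ≤ d) (s : ℝ)
    (hs : s ∈ Set.Ioo (0 : ℝ) 1) (m : ℝ) (hm : 1 ≤ m)
    (z : ℕ → Phase d) (r : ℕ → ℝ) (hr : ∀ j, 0 < r j) :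
    ENNReal.ofReal (m / (m + 1)) * volume (⋃ j, kinCyl d s (z j) (r j)) ≤
      volume (⋃ j, kinCylStack d s m (z j) (r j)) := by
  classical
  set X := EuclideanSpace ℝ (Fin d)
  set A : Set (Phase d) := ⋃ j, kinCyl d s (z j) (r j) with hA
  set B : Set (Phase d) := ⋃ j, kinCylStack d s m (z j) (r j) with hB
  have hAm : MeasurableSet A :=
    MeasurableSet.iUnion fun j => KinStackAux.kinCyl_measurableSet d s (z j) (r j)
  have hBm : MeasurableSet B :=
    MeasurableSet.iUnion fun j => KinStackAux.kinCylStack_measurableSet d s m (z j) (r j)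
  set Ψ : ℝ × (X × X) → Phase d :=
    fun p => (p.1, (p.2.1 + p.1 • p.2.2, p.2.2)) with hΨ
  have hMP : MeasurePreserving Ψ volume volume := KinStackAux.shear_measurePreserving d
  have hvolA : volume A = volume (Ψ ⁻¹' A) := (hMP.measure_preimage hAm.nullMeasurableSet).symm
  have hvolB : volume B = volume (Ψ ⁻¹' B) := (hMP.measure_preimage hBm.nullMeasurableSet).symm
  have hApre : MeasurableSet (Ψ ⁻¹' A) := hMP.measurable hAm
  have hBpre : MeasurableSet (Ψ ⁻¹' B) := hMP.measurable hBm
  have hsliceA : volume (Ψ ⁻¹' A)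
      = ∫⁻ w : X × X, volume {t : ℝ | (t, w.1 + t • w.2, w.2) ∈ A} := by
    rw [Measure.volume_eq_prod, Measure.prod_apply_symm hApre]
    rfl
  have hsliceB : volume (Ψ ⁻¹' B)
      = ∫⁻ w : X × X, volume {t : ℝ | (t, w.1 + t • w.2, w.2) ∈ B} := by
    rw [Measure.volume_eq_prod, Measure.prod_apply_symm hBpre]
    rfl
  rw [hvolA, hvolB, hsliceA, hsliceB,
    ← lintegral_const_mul' _ _ ENNReal.ofReal_ne_top]
  exact lintegral_mono fun w => KinStackAux.slice_le d s m hm z r hr w.1 w.2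
end
end
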